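/- arXiv:1402.1636 — 11 statements merged into one kernel-verified Lean document; each statement's English description precedes it below -/
import Mathlib

section
/- Let u, f ∈ H satisfy A^α u = f with 1/2 < α < 1. Then δ^{2α} ‖u‖² + 2α δ^{2α−1} ⟨(A − δ·I)u, u⟩ ≤ ‖f‖². -/
open scoped RealInnerProductSpace

lemma coercive_isUnit {H : Type*} [NormedAddCommGroup H] [InnerProductSpace ℝ H]
    [CompleteSpace H] (T : H →L[ℝ] H) (c : ℝ) (hc : 0 < c)
    (hT : ∀ v : H, c * ‖v‖ ^ 2 ≤ ⟪T v, v⟫) : IsUnit T := by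
  set B : H →L[ℝ] H →L[ℝ] ℝ := (innerSL ℝ).comp T with hB
  have coer : IsCoercive B := by
    refine ⟨c, hc, fun v => ?_⟩
    have := hT v
    simpa [hB, pow_two, mul_assoc] using this
  set E := coer.continuousLinearEquivOfBilin with hEdef
  have hE : ∀ v, E v = T v := by
    intro v
    refine ext_inner_right ℝ fun w => ?_
    rw [coer.continuousLinearEquivOfBilin_apply]
    simp [hB]
  refine ⟨⟨T, (E.symm : H →L[ℝ] H), ?_, ?_⟩, rfl⟩
  · ext x
    simp only [ContinuousLinearMap.mul_apply, ContinuousLinearMap.one_apply,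
      ContinuousLinearEquiv.coe_coe, ← hE]
    exact E.apply_symm_apply x
  · ext x
    simp only [ContinuousLinearMap.mul_apply, ContinuousLinearMap.one_apply,
      ContinuousLinearEquiv.coe_coe, ← hE]
    exact E.symm_apply_apply x

lemma coercive_spectrum {H : Type*} [NormedAddCommGroup H] [InnerProductSpace ℝ H]
    [CompleteSpace H] (A : H →L[ℝ] H) (δ : ℝ)
    (hAδ : ∀ v : H, δ * ‖v‖ ^ 2 ≤ ⟪A v, v⟫) :
    spectrum ℝ A ⊆ Set.Ici δ := by
  intro x hx
  by_contra hxδ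
  rw [Set.mem_Ici, not_le] at hxδ
  have hT : ∀ v : H, (δ - x) * ‖v‖ ^ 2 ≤ ⟪(A - x • (1 : H →L[ℝ] H)) v, v⟫ := by
    intro v
    have h1 := hAδ v
    have h2 : ⟪(A - x • (1 : H →L[ℝ] H)) v, v⟫ = ⟪A v, v⟫ - x * (‖v‖ ^ 2) := by
      simp [ContinuousLinearMap.sub_apply, inner_sub_left, inner_smul_left,
        real_inner_self_eq_norm_sq]
    rw [h2]; nlinarith
  have hu : IsUnit (A - x • (1 : H →L[ℝ] H)) :=
    coercive_isUnit _ (δ - x) (by linarith) hT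
  have : IsUnit (algebraMap ℝ (H →L[ℝ] H) x - A) := by
    have : algebraMap ℝ (H →L[ℝ] H) x - A = -(A - x • (1 : H →L[ℝ] H)) := by
      rw [Algebra.algebraMap_eq_smul_one]; abel
    rw [this]
    exact hu.neg
  exact spectrum.notMem_iff.mpr this hx

lemma bernoulli_aux {δ x α : ℝ} (hδ : 0 < δ) (hx : δ ≤ x) (hα : 1 ≤ 2 * α) :
    δ ^ (2 * α) + 2 * α * δ ^ (2 * α - 1) * (x - δ) ≤ x ^ (2 * α) := by
  have hx0 : 0 < x := lt_of_lt_of_le hδ hx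
  have hs : (-1 : ℝ) ≤ (x - δ) / δ := by
    have : (0:ℝ) ≤ (x - δ) / δ := div_nonneg (by linarith) hδ.le
    linarith
  have key := one_add_mul_self_le_rpow_one_add hs hα
  have h1 : (1 : ℝ) + (x - δ) / δ = x / δ := by field_simp; ring
  rw [h1, Real.div_rpow hx0.le hδ.le] at key
  have hδp : (0:ℝ) < δ ^ (2 * α) := Real.rpow_pos_of_pos hδ _
  have key2 : (1 + 2 * α * ((x - δ) / δ)) * δ ^ (2 * α) ≤ x ^ (2 * α) := by
    rw [← le_div_iff₀ hδp] at *
    exact key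
  calc δ ^ (2 * α) + 2 * α * δ ^ (2 * α - 1) * (x - δ)
      = (1 + 2 * α * ((x - δ) / δ)) * δ ^ (2 * α) := by
        rw [Real.rpow_sub hδ, Real.rpow_one]
        field_simp
    _ ≤ x ^ (2 * α) := key2

/-- If `A^α u = f` with `1/2 < α < 1`, then
`δ^(2α) ‖u‖² + 2α δ^(2α-1) ⟨(A - δI)u, u⟩ ≤ ‖f‖²`. -/
theorem stmt_1 {H : Type*} [NormedAddCommGroup H] [InnerProductSpace ℝ H] [CompleteSpace H]
    [ContinuousFunctionalCalculus ℝ (H →L[ℝ] H) (IsSelfAdjoint : (H →L[ℝ] H) → Prop)]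
    (A : H →L[ℝ] H) (hA : IsSelfAdjoint A)
    (δ : ℝ) (hδ : 0 < δ) (hAδ : ∀ v : H, δ * ‖v‖ ^ 2 ≤ ⟪A v, v⟫)
    (α : ℝ) (hα0 : 1 / 2 < α) (hα1 : α < 1)
    (u f : H) (huf : (cfc (fun x : ℝ => x ^ α) A) u = f) :
    δ ^ (2 * α) * ‖u‖ ^ 2
      + 2 * α * δ ^ (2 * α - 1) * ⟪(A - δ • (1 : H →L[ℝ] H)) u, u⟫ ≤ ‖f‖ ^ 2 := by
  have hspec : spectrum ℝ A ⊆ Set.Ici δ := coercive_spectrum A δ hAδ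
  have hα2 : (1 : ℝ) ≤ 2 * α := by linarith
  have hαpos : 0 < α := by linarith
  -- continuity facts
  have hcont : Continuous fun x : ℝ => x ^ α := Real.continuous_rpow_const hαpos.le
  have hcont2 : Continuous fun x : ℝ => x ^ (2 * α) :=
    Real.continuous_rpow_const (by linarith)
  -- h := the gap function, nonneg on spectrum
  set c1 : ℝ := δ ^ (2 * α) with hc1
  set c2 : ℝ := 2 * α * δ ^ (2 * α - 1) with hc2
  set h : ℝ → ℝ := fun x => x ^ (2 * α) - c1 - c2 * (x - δ) with hh
  have hconth : Continuous h := by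
    apply Continuous.sub
    apply Continuous.sub hcont2 continuous_const
    exact continuous_const.mul (continuous_id.sub continuous_const)
  have hnn : ∀ x ∈ spectrum ℝ A, 0 ≤ h x := by
    intro x hx
    have := bernoulli_aux hδ (hspec hx) hα2
    simp only [hh, hc1, hc2]
    linarith
  -- sqrt of h
  set k : ℝ → ℝ := fun x => Real.sqrt (h x) with hk
  have hcontk : Continuous k := Real.continuous_sqrt.comp hconth
  -- B := A^α is selfadjoint
  set B : H →L[ℝ] H := cfc (fun x : ℝ => x ^ α) A with hBdef
  have hBsa : IsSelfAdjoint B := cfc_predicate _ A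
  -- C := cfc k A is selfadjoint
  set C : H →L[ℝ] H := cfc k A with hCdef
  have hCsa : IsSelfAdjoint C := cfc_predicate _ A
  -- B * B = cfc (x ^ (2α)) A
  have hBB : B * B = cfc (fun x : ℝ => x ^ (2 * α)) A := by
    rw [hBdef, ← cfc_mul _ _ A hcont.continuousOn hcont.continuousOn]
    apply cfc_congr
    intro x hx
    have hx0 : 0 < x := lt_of_lt_of_le hδ (hspec hx)
    simp only
    rw [← Real.rpow_add hx0, two_mul]
  -- C * C = cfc h A
  have hCC : C * C = cfc h A := by
    rw [hCdef, ← cfc_mul _ _ A hcontk.continuousOn hcontk.continuousOn]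
    apply cfc_congr
    intro x hx
    simp only [hk]
    exact Real.mul_self_sqrt (hnn x hx)
  -- cfc h A in terms of operators
  have hsplit : cfc h A = cfc (fun x : ℝ => x ^ (2 * α)) A - c1 • (1 : H →L[ℝ] H)
      - c2 • (A - δ • (1 : H →L[ℝ] H)) := by
    have e1 : cfc h A = cfc (fun x : ℝ => x ^ (2 * α) - c1) A
        - cfc (fun x : ℝ => c2 * (x - δ)) A :=
      cfc_sub (fun x : ℝ => x ^ (2 * α) - c1) (fun x : ℝ => c2 * (x - δ)) A
        (hcont2.sub continuous_const).continuousOn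
        (continuous_const.mul (continuous_id.sub continuous_const)).continuousOn
    have e2 : cfc (fun x : ℝ => x ^ (2 * α) - c1) A
        = cfc (fun x : ℝ => x ^ (2 * α)) A - c1 • (1 : H →L[ℝ] H) := by
      rw [cfc_sub (fun x : ℝ => x ^ (2 * α)) (fun _ : ℝ => c1) A hcont2.continuousOn
        continuousOn_const, cfc_const c1 A, Algebra.algebraMap_eq_smul_one]
    have e3 : cfc (fun x : ℝ => c2 * (x - δ)) A = c2 • (A - δ • (1 : H →L[ℝ] H)) := by
      rw [cfc_const_mul c2 (fun x : ℝ => x - δ) A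
        (continuous_id.sub continuous_const).continuousOn]
      congr 1
      rw [cfc_sub (fun x : ℝ => x) (fun _ : ℝ => δ) A continuous_id.continuousOn
        continuousOn_const, cfc_id' ℝ A, cfc_const δ A, Algebra.algebraMap_eq_smul_one]
    rw [e1, e2, e3]
  -- inner product computations
  have hBsym := hBsa.isSymmetric
  have hCsym := hCsa.isSymmetric
  have hf2 : ‖f‖ ^ 2 = ⟪(B * B) u, u⟫ := by
    rw [← huf, ← real_inner_self_eq_norm_sq, ContinuousLinearMap.mul_apply]
    exact (hBsym (B u) u).symm
  have hCnn : 0 ≤ ⟪(C * C) u, u⟫ := by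
    have e : ⟪C (C u), u⟫ = ⟪C u, C u⟫ := hCsym (C u) u
    rw [ContinuousLinearMap.mul_apply, e]
    exact real_inner_self_nonneg
  rw [hCC, hsplit] at hCnn
  rw [hf2, hBB]
  have expand : ⟪(cfc (fun x : ℝ => x ^ (2 * α)) A - c1 • (1 : H →L[ℝ] H)
      - c2 • (A - δ • (1 : H →L[ℝ] H))) u, u⟫
      = ⟪cfc (fun x : ℝ => x ^ (2 * α)) A u, u⟫ - c1 * ‖u‖ ^ 2
        - c2 * ⟪(A - δ • (1 : H →L[ℝ] H)) u, u⟫ := by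
    simp [ContinuousLinearMap.sub_apply, ContinuousLinearMap.smul_apply,
      inner_sub_left, inner_smul_left, real_inner_self_eq_norm_sq]
  rw [expand] at hCnn
  linarith
end

section
/- Fix w₀ ∈ H and 0 < α < 1, and define w(t) = δ^α (t·D + δ·I)^{−α} w₀ for t ≥ 0, where the negative fractional power is taken via continuous functional calculus of the positive operator t·D + δ·I. Then for every t ≥ 0 the map w is differentiable at t and its derivative satisfies the pseudo-parabolic equation (t·D + δ·I) w'(t) + α D w(t) = 0. -/
open scoped RealInnerProductSpace

section AuxLemmas

variable {H : Type*} [NormedAddCommGroup H] [InnerProductSpace ℝ H] [CompleteSpace H]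
  [ContinuousFunctionalCalculus ℝ (H →L[ℝ] H) (IsSelfAdjoint : (H →L[ℝ] H) → Prop)]

lemma stmt5_cfc_vec_norm_le (D : H →L[ℝ] H) (hD : IsSelfAdjoint D) (ψ : ℝ → ℝ)
    (hψ : ContinuousOn ψ (spectrum ℝ D)) {C : ℝ} (hC0 : 0 ≤ C)
    (hC : ∀ x ∈ spectrum ℝ D, |ψ x| ≤ C) (v : H) :
    ‖cfc ψ D v‖ ≤ C * ‖v‖ := by
  letI := ContinuousLinearMap.instStarOrderedRingRCLike (𝕜 := ℝ) (H := H)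
  set S := cfc ψ D with hS
  have hSsa : IsSelfAdjoint S := cfc_predicate ψ D
  have hsymm := (ContinuousLinearMap.isSelfAdjoint_iff_isSymmetric.mp hSsa)
  have hmul : S * S = cfc (fun x => ψ x * ψ x) D := (cfc_mul ψ ψ D hψ hψ).symm
  have hle : (0:H →L[ℝ] H) ≤ C ^ 2 • 1 - cfc (fun x => ψ x * ψ x) D := by
    have h1 : cfc (fun x : ℝ => C ^ 2 - ψ x * ψ x) D =
        C ^ 2 • (1 : H →L[ℝ] H) - cfc (fun x => ψ x * ψ x) D := by
      rw [cfc_sub (fun _ : ℝ => C ^ 2) (fun x => ψ x * ψ x) D continuousOn_const (hψ.mul hψ)]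
      congr 1
      rw [cfc_const _ D hD, Algebra.algebraMap_eq_smul_one]
    have h2 : (0 : H →L[ℝ] H) ≤ cfc (fun x : ℝ => C ^ 2 - ψ x * ψ x) D := by
      refine cfc_nonneg fun x hx => ?_
      have := hC x hx
      nlinarith [abs_nonneg (ψ x), neg_abs_le (ψ x), le_abs_self (ψ x)]
    rwa [h1] at h2
  have hpos := (ContinuousLinearMap.nonneg_iff_isPositive _).mp hle
  have key : ⟪(S * S) v, v⟫ ≤ C ^ 2 * ‖v‖ ^ 2 := by
    have h3 := hpos.inner_nonneg_left v
    simp only [RCLike.inner_apply, starRingEnd_apply, star_trivial, RCLike.re_to_real,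
      ContinuousLinearMap.sub_apply, ContinuousLinearMap.smul_apply,
      ContinuousLinearMap.one_apply, inner_sub_left, real_inner_smul_left] at h3
    rw [hmul]
    have hvv : ⟪v, v⟫ = ‖v‖ ^ 2 := real_inner_self_eq_norm_sq v
    nlinarith [h3]
  have hnorm : ‖S v‖ ^ 2 ≤ (C * ‖v‖) ^ 2 := by
    have h4 : ⟪S v, S v⟫ = ⟪(S * S) v, v⟫ := by
      rw [ContinuousLinearMap.mul_apply]
      exact (hsymm (S v) v).symm
    rw [← real_inner_self_eq_norm_sq]
    calc ⟪S v, S v⟫ = ⟪(S * S) v, v⟫ := h4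
    _ ≤ C ^ 2 * ‖v‖ ^ 2 := key
    _ = (C * ‖v‖) ^ 2 := by ring
  exact (pow_le_pow_iff_left₀ (norm_nonneg _) (by positivity) (by norm_num)).mp hnorm

lemma stmt5_affine_cfc (D : H →L[ℝ] H) (hD : IsSelfAdjoint D) (s δ : ℝ) :
    s • D + δ • (1 : H →L[ℝ] H) = cfc (fun x : ℝ => s * x + δ) D := by
  have h1 : ContinuousOn (fun x : ℝ => s * x) (spectrum ℝ D) :=
    (continuous_const.mul continuous_id).continuousOn
  rw [cfc_add D (fun x : ℝ => s * x) (fun _ : ℝ => δ) h1 continuousOn_const,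
    cfc_const_mul_id s D hD, cfc_const δ D hD, Algebra.algebraMap_eq_smul_one]

lemma stmt5_w_rewrite (D : H →L[ℝ] H) (hD : IsSelfAdjoint D) (s δ α : ℝ)
    (hpos : ∀ x ∈ spectrum ℝ D, 0 < s * x + δ) :
    cfc (fun x : ℝ => x ^ (-α)) (s • D + δ • (1 : H →L[ℝ] H))
      = cfc (fun x : ℝ => (s * x + δ) ^ (-α)) D := by
  rw [stmt5_affine_cfc D hD s δ,
    ← cfc_comp' (fun x : ℝ => x ^ (-α)) (fun x : ℝ => s * x + δ) D ?hg ?hf]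
  case hf => exact ((continuous_const.mul continuous_id).add continuous_const).continuousOn
  case hg =>
    apply ContinuousOn.rpow_const continuousOn_id
    rintro y ⟨x, hx, rfl⟩
    exact Or.inl (ne_of_gt (hpos x hx))

end AuxLemmas

/-- Scalar second-order Taylor estimate for `u ↦ (u*x+δ)^(-α)`. -/
lemma stmt5_taylor_aux {δ α x M t s : ℝ} (hδ : 0 < δ) (hα : 0 < α) (hx : 0 ≤ x) (hxM : x ≤ M)
    (ht : 0 ≤ t) (hs : |s - t| ≤ δ / (2 * (M + 1))) :
    |(s * x + δ) ^ (-α) - (t * x + δ) ^ (-α) - (s - t) * (-α * (t * x + δ) ^ (-α - 1) * x)|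
      ≤ (α * (α + 1) * (δ / 2) ^ (-α - 2) * M ^ 2) * (s - t) ^ 2 := by
  set ε := δ / (2 * (M + 1)) with hε
  have hM : 0 ≤ M := le_trans hx hxM
  have hεpos : 0 < ε := by positivity
  set φ : ℝ → ℝ := fun u => (u * x + δ) ^ (-α) with hφ
  set φ' : ℝ → ℝ := fun u => -α * (u * x + δ) ^ (-α - 1) * x with hφ'
  set φ'' : ℝ → ℝ := fun u => -α * ((-α - 1) * (u * x + δ) ^ (-α - 2) * x) * x with hφ''
  set C : ℝ := α * (α + 1) * (δ / 2) ^ (-α - 2) * M ^ 2 with hC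
  set J : Set ℝ := Set.Icc (t - ε) (t + ε) with hJ
  have hbase : ∀ u ∈ J, δ / 2 ≤ u * x + δ := by
    intro u hu
    rcases hu with ⟨h1, h2⟩
    have hεM : ε * M ≤ δ / 2 := by
      rw [hε, div_mul_eq_mul_div, div_le_div_iff₀ (by positivity) (by norm_num)]
      nlinarith
    nlinarith [mul_le_mul_of_nonneg_right (sub_le_sub_right h1 0) hx]
  have hbasepos : ∀ u ∈ J, 0 < u * x + δ := fun u hu => lt_of_lt_of_le (by positivity) (hbase u hu)
  have haff : ∀ u : ℝ, HasDerivAt (fun v : ℝ => v * x + δ) x u := by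
    intro u
    simpa using ((hasDerivAt_id u).mul_const x).add_const δ
  have hd1 : ∀ u ∈ J, HasDerivAt φ (φ' u) u := by
    intro u hu
    have h := (haff u).rpow_const (p := -α) (Or.inl (ne_of_gt (hbasepos u hu)))
    convert h using 1
    simp only [hφ']
    ring
  have hd2 : ∀ u ∈ J, HasDerivAt φ' (φ'' u) u := by
    intro u hu
    have h := ((haff u).rpow_const (p := -α - 1)
      (Or.inl (ne_of_gt (hbasepos u hu)))).const_mul (-α) |>.mul_const x
    have he : (-α - 1) - 1 = -α - 2 := by ring
    rw [he] at h
    refine h.congr_deriv ?_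
    simp only [hφ'']
    ring
  have hφ''bound : ∀ u ∈ J, |φ'' u| ≤ C := by
    intro u hu
    have h1 : (u * x + δ) ^ (-α - 2) ≤ (δ / 2) ^ (-α - 2) :=
      Real.rpow_le_rpow_of_nonpos (by positivity) (hbase u hu) (by linarith)
    have h2 : (0:ℝ) ≤ (u * x + δ) ^ (-α - 2) := Real.rpow_nonneg (le_of_lt (hbasepos u hu)) _
    have hval : φ'' u = α * (α + 1) * (u * x + δ) ^ (-α - 2) * x ^ 2 := by
      simp only [hφ'']
      ring
    have hnn : (0:ℝ) ≤ α * (α + 1) * (u * x + δ) ^ (-α - 2) * x ^ 2 :=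
      mul_nonneg (mul_nonneg (mul_nonneg hα.le (by linarith)) h2) (sq_nonneg x)
    rw [hval, abs_of_nonneg hnn, hC]
    have hx2 : x ^ 2 ≤ M ^ 2 := by nlinarith
    have h3 : (0:ℝ) ≤ (δ / 2) ^ (-α - 2) :=
      Real.rpow_nonneg (by positivity) _
    have hAB := mul_le_mul h1 hx2 (sq_nonneg x) h3
    calc α * (α + 1) * (u * x + δ) ^ (-α - 2) * x ^ 2
        = α * (α + 1) * ((u * x + δ) ^ (-α - 2) * x ^ 2) := by ring
      _ ≤ α * (α + 1) * ((δ / 2) ^ (-α - 2) * M ^ 2) :=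
          mul_le_mul_of_nonneg_left hAB (by positivity)
      _ = α * (α + 1) * (δ / 2) ^ (-α - 2) * M ^ 2 := by ring
  have htJ : t ∈ J := by constructor <;> simp [hJ] <;> linarith
  have hsJ : s ∈ J := by
    rw [hJ, Set.mem_Icc]
    rw [abs_le] at hs
    constructor <;> linarith
  -- step 1 : Lipschitz bound for φ'
  have step1 : ∀ u ∈ J, |φ' u - φ' t| ≤ C * |u - t| := by
    intro u hu
    have := Convex.norm_image_sub_le_of_norm_hasDerivWithin_le
      (f := φ') (f' := φ'') (s := J) (fun v hv => (hd2 v hv).hasDerivWithinAt)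
      hφ''bound (convex_Icc _ _) htJ hu
    simpa [Real.norm_eq_abs] using this
  -- step 2
  set G : ℝ → ℝ := fun u => φ u - u * φ' t with hG
  set K : Set ℝ := Set.uIcc t s with hK
  have hKJ : K ⊆ J := Set.uIcc_subset_Icc htJ hsJ
  have hGd : ∀ u ∈ K, HasDerivWithinAt G (φ' u - φ' t) K u := by
    intro u hu
    have hlin : HasDerivAt (fun v : ℝ => v * φ' t) (φ' t) u := by
      simpa using (hasDerivAt_id u).mul_const (φ' t)
    exact ((hd1 u (hKJ hu)).sub hlin).hasDerivWithinAt
  have hGbound : ∀ u ∈ K, ‖φ' u - φ' t‖ ≤ C * |s - t| := by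
    intro u hu
    have h1 := step1 u (hKJ hu)
    have h2 : |u - t| ≤ |s - t| := by
      rw [hK] at hu
      rcases Set.mem_uIcc.mp hu with ⟨h3, h4⟩ | ⟨h3, h4⟩
      · calc |u - t| = u - t := abs_of_nonneg (by linarith)
          _ ≤ s - t := by linarith
          _ ≤ |s - t| := le_abs_self _
      · calc |u - t| = -(u - t) := abs_of_nonpos (by linarith)
          _ ≤ -(s - t) := by linarith
          _ ≤ |s - t| := neg_le_abs _
    calc ‖φ' u - φ' t‖ = |φ' u - φ' t| := rfl
    _ ≤ C * |u - t| := h1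
    _ ≤ C * |s - t| := by
        apply mul_le_mul_of_nonneg_left h2
        rw [hC]; positivity
  have step2 := Convex.norm_image_sub_le_of_norm_hasDerivWithin_le
    (f := G) (f' := fun u => φ' u - φ' t) (s := K) hGd hGbound (convex_uIcc _ _)
    (Set.left_mem_uIcc) (Set.right_mem_uIcc)
  have hGdiff : G s - G t = φ s - φ t - (s - t) * φ' t := by rw [hG]; ring
  rw [Real.norm_eq_abs, Real.norm_eq_abs, hGdiff] at step2
  calc |φ s - φ t - (s - t) * φ' t| ≤ C * |s - t| * |s - t| := step2
  _ = C * (s - t) ^ 2 := by rw [mul_assoc, ← abs_mul, ← sq, abs_of_nonneg (sq_nonneg _)]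

/-- `w(t) = δ^α (tD + δI)^(-α) w₀` is differentiable at every `t ≥ 0` and its
derivative satisfies the pseudo-parabolic equation `(tD + δI) w'(t) + α D w(t) = 0`. -/
theorem stmt_5 {H : Type*} [NormedAddCommGroup H] [InnerProductSpace ℝ H] [CompleteSpace H]
    [ContinuousFunctionalCalculus ℝ (H →L[ℝ] H) (IsSelfAdjoint : (H →L[ℝ] H) → Prop)]
    (D : H →L[ℝ] H) (hD : IsSelfAdjoint D) (hDpos : ∀ v : H, 0 ≤ ⟪D v, v⟫)
    (δ : ℝ) (hδ : 0 < δ) (α : ℝ) (hα0 : 0 < α) (hα1 : α < 1)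
    (w₀ : H) (w : ℝ → H)
    (hw : ∀ t : ℝ,
      w t = δ ^ α • (cfc (fun x : ℝ => x ^ (-α)) (t • D + δ • (1 : H →L[ℝ] H))) w₀) :
    ∀ t : ℝ, 0 ≤ t → ∃ w' : H, HasDerivAt w w' t ∧
      (t • D + δ • (1 : H →L[ℝ] H)) w' + α • D (w t) = 0 := by
  rcases subsingleton_or_nontrivial H with hsub | hnt
  · intro t ht
    refine ⟨0, ?_, Subsingleton.elim _ _⟩
    have hw0 : w = fun _ => w t := funext fun s => Subsingleton.elim _ _
    rw [hw0]
    exact hasDerivAt_const t (w t)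
  intro t ht
  set M := ‖D‖ with hM
  have hDp : D.IsPositive := ⟨ContinuousLinearMap.isSelfAdjoint_iff_isSymmetric.mp hD, fun x => by
    simpa [ContinuousLinearMap.reApplyInnerSelf] using hDpos x⟩
  have hσ0 : ∀ x ∈ spectrum ℝ D, 0 ≤ x := by
    have := hDp.spectrumRestricts
    rw [SpectrumRestricts.nnreal_iff] at this
    exact this
  have hσM : ∀ x ∈ spectrum ℝ D, x ≤ M := fun x hx =>
    le_trans (le_abs_self x) (spectrum.norm_le_norm_of_mem hx)
  have hM0 : (0:ℝ) ≤ M := norm_nonneg D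
  set ε := δ / (2 * (M + 1)) with hε
  have hεpos : 0 < ε := by positivity
  have hbase : ∀ s : ℝ, |s - t| ≤ ε → ∀ x ∈ spectrum ℝ D, δ / 2 ≤ s * x + δ := by
    intro s hs x hx
    have h0 := hσ0 x hx
    have h1 := hσM x hx
    have hεM : ε * M ≤ δ / 2 := by
      rw [hε, div_mul_eq_mul_div, div_le_div_iff₀ (by positivity) (by norm_num)]
      nlinarith
    have h2 : t - ε ≤ s := by
      have := abs_le.mp hs; linarith [this.1]
    nlinarith [mul_le_mul_of_nonneg_right (sub_le_sub_right h2 0) h0,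
      mul_le_mul_of_nonneg_left h1 hεpos.le, mul_nonneg ht h0]
  have hbpos : ∀ s : ℝ, |s - t| ≤ ε → ∀ x ∈ spectrum ℝ D, 0 < s * x + δ :=
    fun s hs x hx => lt_of_lt_of_le (by positivity) (hbase s hs x hx)
  have ht0 : |t - t| ≤ ε := by simpa using hεpos.le
  set g : ℝ → ℝ → ℝ := fun s x => (s * x + δ) ^ (-α) with hg
  set g' : ℝ → ℝ := fun x => -α * (t * x + δ) ^ (-α - 1) * x with hg'
  have hgc : ∀ s : ℝ, |s - t| ≤ ε → ContinuousOn (g s) (spectrum ℝ D) := by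
    intro s hs
    apply ContinuousOn.rpow_const
      ((continuous_const.mul continuous_id).add continuous_const).continuousOn
    intro x hx
    exact Or.inl (ne_of_gt (hbpos s hs x hx))
  have hg'c : ContinuousOn g' (spectrum ℝ D) := by
    apply ContinuousOn.mul _ continuous_id.continuousOn
    apply ContinuousOn.mul continuousOn_const
    apply ContinuousOn.rpow_const
      ((continuous_const.mul continuous_id).add continuous_const).continuousOn
    intro x hx
    exact Or.inl (ne_of_gt (hbpos t ht0 x hx))
  have hre : ∀ s : ℝ, |s - t| ≤ ε → w s = δ ^ α • cfc (g s) D w₀ := by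
    intro s hs
    rw [hw s, stmt5_w_rewrite D hD s δ α (hbpos s hs)]
  set w' : H := δ ^ α • cfc g' D w₀ with hw'
  set C : ℝ := α * (α + 1) * (δ / 2) ^ (-α - 2) * M ^ 2 with hC
  have hC0 : 0 ≤ C := by
    rw [hC]
    have := Real.rpow_nonneg (show (0:ℝ) ≤ δ / 2 by positivity) (-α - 2)
    positivity
  -- key quantitative estimate
  have key : ∀ s : ℝ, |s - t| ≤ ε →
      ‖w s - w t - (s - t) • w'‖ ≤ (δ ^ α * (C * ‖w₀‖)) * (s - t) ^ 2 := by
    intro s hs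
    have hψc : ContinuousOn (fun x => g s x - g t x - (s - t) * g' x) (spectrum ℝ D) :=
      ((hgc s hs).sub (hgc t ht0)).sub (continuousOn_const.mul hg'c)
    have hcfc : cfc (fun x => g s x - g t x - (s - t) * g' x) D
        = cfc (g s) D - cfc (g t) D - (s - t) • cfc g' D := by
      rw [cfc_sub (fun x => g s x - g t x) (fun x => (s - t) * g' x) D ((hgc s hs).sub (hgc t ht0)) (continuousOn_const.mul hg'c),
        cfc_sub (g s) (g t) D (hgc s hs) (hgc t ht0), cfc_const_mul (s - t) g' D hg'c]
    have hdiff : w s - w t - (s - t) • w' =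
        δ ^ α • cfc (fun x => g s x - g t x - (s - t) * g' x) D w₀ := by
      rw [hre s hs, hre t ht0, hw', hcfc]
      simp only [ContinuousLinearMap.sub_apply, ContinuousLinearMap.smul_apply]
      module
    have hpt : ∀ x ∈ spectrum ℝ D, |g s x - g t x - (s - t) * g' x| ≤ C * (s - t) ^ 2 :=
      fun x hx => stmt5_taylor_aux hδ hα0 (hσ0 x hx) (hσM x hx) ht hs
    have hnn : 0 ≤ C * (s - t) ^ 2 := mul_nonneg hC0 (sq_nonneg _)
    have hb := stmt5_cfc_vec_norm_le D hD _ hψc hnn hpt w₀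
    rw [hdiff, norm_smul, Real.norm_eq_abs, abs_of_nonneg (Real.rpow_nonneg hδ.le α)]
    calc δ ^ α * ‖cfc (fun x => g s x - g t x - (s - t) * g' x) D w₀‖
        ≤ δ ^ α * (C * (s - t) ^ 2 * ‖w₀‖) :=
          mul_le_mul_of_nonneg_left hb (Real.rpow_nonneg hδ.le α)
      _ = (δ ^ α * (C * ‖w₀‖)) * (s - t) ^ 2 := by ring
  -- differentiability
  have hder : HasDerivAt w w' t := by
    rw [hasDerivAt_iff_isLittleO]
    have hbig : (fun s => w s - w t - (s - t) • w') =O[nhds t] fun s => (s - t) ^ 2 := by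
      rw [Asymptotics.isBigO_iff]
      refine ⟨δ ^ α * (C * ‖w₀‖), ?_⟩
      filter_upwards [Metric.closedBall_mem_nhds t hεpos] with s hs
      rw [Metric.mem_closedBall, Real.dist_eq] at hs
      calc ‖w s - w t - (s - t) • w'‖ ≤ (δ ^ α * (C * ‖w₀‖)) * (s - t) ^ 2 := key s hs
        _ = δ ^ α * (C * ‖w₀‖) * ‖(s - t) ^ 2‖ := by
            rw [Real.norm_eq_abs, abs_of_nonneg (sq_nonneg _)]
    have hsm : (fun s : ℝ => (s - t) ^ 2) =o[nhds t] fun s => s - t := by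
      have h1 : (fun s : ℝ => s - t) =o[nhds t] (fun _ => (1:ℝ)) := by
        rw [Asymptotics.isLittleO_one_iff]
        simpa using (continuous_id.tendsto t).sub (tendsto_const_nhds (x := t))
      have h2 := h1.mul_isBigO (Asymptotics.isBigO_refl (fun s : ℝ => s - t) (nhds t))
      simpa [pow_two] using h2
    exact hbig.trans_isLittleO hsm
  refine ⟨w', hder, ?_⟩
  -- the pseudo-parabolic equation
  have haffc : ContinuousOn (fun x : ℝ => t * x + δ) (spectrum ℝ D) :=
    ((continuous_const.mul continuous_id).add continuous_const).continuousOn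
  have hmulc1 : ContinuousOn (fun x : ℝ => (t * x + δ) * g' x) (spectrum ℝ D) :=
    haffc.mul hg'c
  have hmulc2 : ContinuousOn (fun x : ℝ => α * (x * g t x)) (spectrum ℝ D) :=
    continuousOn_const.mul (continuous_id.continuousOn.mul (hgc t ht0))
  have e1 : (t • D + δ • (1 : H →L[ℝ] H)) w'
      = δ ^ α • cfc (fun x => (t * x + δ) * g' x) D w₀ := by
    rw [hw', map_smul]
    congr 1
    rw [stmt5_affine_cfc D hD t δ, cfc_mul _ _ D haffc hg'c]
    rfl
  have e2 : α • D (w t) = δ ^ α • cfc (fun x => α * (x * g t x)) D w₀ := by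
    rw [hre t ht0, map_smul, smul_comm]
    congr 1
    have hidc : ContinuousOn (fun x : ℝ => x) (spectrum ℝ D) := continuous_id.continuousOn
    rw [cfc_const_mul α (fun x => x * g t x) D (hidc.mul (hgc t ht0)),
      cfc_mul (fun x : ℝ => x) (g t) D hidc (hgc t ht0), cfc_id' (R := ℝ) D hD]
    simp [ContinuousLinearMap.mul_apply]
  have e3 : (t • D + δ • (1 : H →L[ℝ] H)) w' + α • D (w t)
      = δ ^ α • cfc (fun x => (t * x + δ) * g' x + α * (x * g t x)) D w₀ := by
    rw [e1, e2, ← smul_add, cfc_add D _ _ hmulc1 hmulc2]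
    simp [ContinuousLinearMap.add_apply]
  have e4 : cfc (fun x => (t * x + δ) * g' x + α * (x * g t x)) D = 0 := by
    have h0 : ∀ x ∈ spectrum ℝ D, (t * x + δ) * g' x + α * (x * g t x) = 0 := by
      intro x hx
      have hy : 0 < t * x + δ := hbpos t ht0 x hx
      have hr : (t * x + δ) * (t * x + δ) ^ (-α - 1) = (t * x + δ) ^ (-α) := by
        have h := Real.rpow_add hy 1 (-α - 1)
        rw [Real.rpow_one] at h
        have harg : (1:ℝ) + (-α - 1) = -α := by ring
        rw [harg] at h
        exact h.symm
      simp only [hg, hg']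
      have hrng : (t * x + δ) * (-α * (t * x + δ) ^ (-α - 1) * x)
          = -α * x * ((t * x + δ) * (t * x + δ) ^ (-α - 1)) := by ring
      rw [hrng, hr]
      ring
    calc cfc (fun x => (t * x + δ) * g' x + α * (x * g t x)) D
        = cfc (fun _ : ℝ => (0:ℝ)) D := cfc_congr h0
      _ = 0 := by simp
  rw [e3, e4]
  simp
end

section
/- Let 0 < α < 1, f ∈ H, and let w : [0,1] → H be differentiable and satisfy (t·D + δ·I) w'(t) + α D w(t) = 0 for all t ∈ [0,1] together with the initial condition w(0) = δ^{−α} f. Then u := w(1) satisfies A^α u = f, where A := D + δ·I. -/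
open Set

/-- Pointwise derivative of `s ↦ (s*x+δ)^α`. -/
lemma aux_hasDerivAt {δ α : ℝ} (x : ℝ) {u : ℝ} (hpos : 0 < u * x + δ) :
    HasDerivAt (fun s : ℝ => (s * x + δ) ^ α) (α * (u * x + δ) ^ (α - 1) * x) u := by
  have h1 : HasDerivAt (fun s : ℝ => s * x + δ) x u :=
    (hasDerivAt_mul_const x).add_const δ
  exact (Real.hasDerivAt_rpow_const (p := α) (Or.inl hpos.ne')).comp u h1

/-- Uniform differentiability of `t ↦ (t*x+δ)^α` for `t ∈ [0,1]`, `x ∈ [0,M]`. -/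
lemma aux_unif {δ α M : ℝ} (hδ : 0 < δ) (hM : 0 ≤ M) {ε : ℝ} (hε : 0 < ε) :
    ∃ η > 0, ∀ t ∈ Icc (0:ℝ) 1, ∀ s ∈ Icc (0:ℝ) 1, |s - t| < η →
      ∀ x ∈ Icc (0:ℝ) M,
        |(s * x + δ) ^ α - (t * x + δ) ^ α - (s - t) * (α * (t * x + δ) ^ (α - 1) * x)|
          ≤ ε * |s - t| := by
  have hbase : ∀ u ∈ Icc (0:ℝ) 1, ∀ x ∈ Icc (0:ℝ) M, 0 < u * x + δ := fun u hu x hx =>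
    add_pos_of_nonneg_of_pos (mul_nonneg hu.1 hx.1) hδ
  -- the partial derivative as a function of (t, x)
  set φ : ℝ × ℝ → ℝ := fun p => α * (p.1 * p.2 + δ) ^ (α - 1) * p.2 with hφ
  have hK : IsCompact (Icc (0:ℝ) 1 ×ˢ Icc (0:ℝ) M) := isCompact_Icc.prod isCompact_Icc
  have hφc : ContinuousOn φ (Icc (0:ℝ) 1 ×ˢ Icc (0:ℝ) M) := by
    apply ContinuousOn.mul
    · apply continuousOn_const.mul
      apply ContinuousOn.rpow_const
      · exact ((continuousOn_fst.mul continuousOn_snd).add continuousOn_const)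
      · rintro ⟨u, x⟩ hp
        exact Or.inl (hbase u hp.1 x hp.2).ne'
    · exact continuousOn_snd
  have hUC := hK.uniformContinuousOn_of_continuous hφc
  rw [Metric.uniformContinuousOn_iff] at hUC
  obtain ⟨η, hη, hUC⟩ := hUC ε hε
  refine ⟨η, hη, ?_⟩
  intro t ht s hs hst x hx
  rcases eq_or_ne s t with rfl | hne
  · simp
  -- mean value theorem on the interval between t and s
  set a := min t s
  set b := max t s
  have hab : a < b := by
    rcases hne.lt_or_gt with h | h
    · simp [a, b, min_eq_left h.le, max_eq_right h.le, h]
    · simp [a, b, min_eq_right h.le, max_eq_left h.le, h]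
  have haI : a ∈ Icc (0:ℝ) 1 := by
    rcases min_cases t s with ⟨h, _⟩ | ⟨h, _⟩ <;> simp only [a, h] <;> assumption
  have hbI : b ∈ Icc (0:ℝ) 1 := by
    rcases max_cases t s with ⟨h, _⟩ | ⟨h, _⟩ <;> simp only [b, h] <;> assumption
  have hsub : Icc a b ⊆ Icc (0:ℝ) 1 := Icc_subset_Icc haI.1 hbI.2
  have hder : ∀ u ∈ Ioo a b, HasDerivAt (fun s : ℝ => (s * x + δ) ^ α)
      (φ (u, x)) u := by
    intro u hu
    exact aux_hasDerivAt x (hbase u (hsub (Ioo_subset_Icc_self hu)) x hx)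
  have hcont : ContinuousOn (fun s : ℝ => (s * x + δ) ^ α) (Icc a b) := by
    intro u hu
    exact ((aux_hasDerivAt x (hbase u (hsub hu) x hx)).continuousAt).continuousWithinAt
  obtain ⟨c, hc, hceq⟩ := exists_hasDerivAt_eq_slope (fun s : ℝ => (s * x + δ) ^ α)
    (fun u => φ (u, x)) hab hcont hder
  have hcI : c ∈ Icc (0:ℝ) 1 := hsub (Ioo_subset_Icc_self hc)
  -- `g s - g t = (s - t) * φ (c, x)`
  have hslope : (s * x + δ) ^ α - (t * x + δ) ^ α = (s - t) * φ (c, x) := by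
    have hba : b - a ≠ 0 := sub_ne_zero.2 hab.ne'
    have := (div_eq_iff hba).mp hceq.symm
    rcases hne.lt_or_gt with h | h
    · have ha' : a = s := min_eq_right h.le
      have hb' : b = t := max_eq_left h.le
      rw [ha', hb'] at this
      linarith [this]
    · have ha' : a = t := min_eq_left h.le
      have hb' : b = s := max_eq_right h.le
      rw [ha', hb'] at this
      linarith [this]
  rw [hslope, ← mul_sub, abs_mul, mul_comm (ε) (|s - t|)]
  apply mul_le_mul_of_nonneg_left _ (abs_nonneg _)
  have h1 : |c - t| < η := by
    have h2 : |c - t| ≤ |s - t| := by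
      rcases hne.lt_or_gt with h | h
      · have ha' : a = s := min_eq_right h.le
        have hb' : b = t := max_eq_left h.le
        rw [ha', hb'] at hc
        rw [abs_of_nonpos (by linarith [hc.2]), abs_of_nonpos (by linarith)]
        linarith [hc.1]
      · have ha' : a = t := min_eq_left h.le
        have hb' : b = s := max_eq_right h.le
        rw [ha', hb'] at hc
        rw [abs_of_nonneg (by linarith [hc.1]), abs_of_nonneg (by linarith)]
        linarith [hc.2]
    exact h2.trans_lt hst
  have hdist : dist (c, x) (t, x) < η := by
    rw [Prod.dist_eq]
    apply max_lt _ (by simpa using hη)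
    rw [Real.dist_eq]; exact h1
  have := hUC (c, x) (mk_mem_prod hcI hx) (t, x) (mk_mem_prod ht hx) hdist
  rw [Real.dist_eq] at this
  exact this.le



open scoped RealInnerProductSpace

/-- If `w` is differentiable on `[0,1]`, satisfies
`(tD + δI) w'(t) + α D w(t) = 0` there, and `w(0) = δ^(-α) f`, then `u := w(1)` solves
`A^α u = f` with `A := D + δI`. -/
theorem stmt_6 {H : Type*} [NormedAddCommGroup H] [InnerProductSpace ℝ H] [CompleteSpace H]
    [ContinuousFunctionalCalculus ℝ (H →L[ℝ] H) (IsSelfAdjoint : (H →L[ℝ] H) → Prop)]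
    (D : H →L[ℝ] H) (hD : IsSelfAdjoint D) (hDpos : ∀ v : H, 0 ≤ ⟪D v, v⟫)
    (δ : ℝ) (hδ : 0 < δ) (α : ℝ) (hα0 : 0 < α) (hα1 : α < 1)
    (f : H) (w w' : ℝ → H)
    (hderiv : ∀ t ∈ Set.Icc (0 : ℝ) 1, HasDerivAt w (w' t) t)
    (heq : ∀ t ∈ Set.Icc (0 : ℝ) 1,
      (t • D + δ • (1 : H →L[ℝ] H)) (w' t) + α • D (w t) = 0)
    (hinit : w 0 = δ ^ (-α) • f) :
    (cfc (fun x : ℝ => x ^ α) (D + δ • (1 : H →L[ℝ] H))) (w 1) = f := by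
  rcases subsingleton_or_nontrivial H with hH | hH
  · exact Subsingleton.elim _ _
  -- spectrum facts
  have hσ0 : ∀ x ∈ spectrum ℝ D, (0:ℝ) ≤ x := by
    have hpos : D.IsPositive := (ContinuousLinearMap.isPositive_iff' D).mpr ⟨hD, hDpos⟩
    exact SpectrumRestricts.nnreal_iff.mp hpos.spectrumRestricts
  have hσM : ∀ x ∈ spectrum ℝ D, x ≤ ‖D‖ := fun x hx =>
    (le_abs_self x).trans (by simpa [Real.norm_eq_abs] using spectrum.norm_le_norm_of_mem hx)
  have hσsub : spectrum ℝ D ⊆ Set.Icc 0 ‖D‖ := fun x hx => ⟨hσ0 x hx, hσM x hx⟩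
  have hbase : ∀ t ∈ Set.Icc (0:ℝ) 1, ∀ x ∈ spectrum ℝ D, 0 < t * x + δ := fun t ht x hx =>
    add_pos_of_nonneg_of_pos (mul_nonneg ht.1 (hσ0 x hx)) hδ
  -- continuity on the spectrum
  have hcontσ : ∀ (β : ℝ), ∀ t ∈ Set.Icc (0:ℝ) 1,
      ContinuousOn (fun x : ℝ => (t * x + δ) ^ β) (spectrum ℝ D) := by
    intro β t ht
    apply ContinuousOn.rpow_const
    · exact (continuousOn_const.mul continuousOn_id).add continuousOn_const
    · exact fun x hx => Or.inl (hbase t ht x hx).ne'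
  -- the moving function and its t-derivative
  set g : ℝ → ℝ → ℝ := fun t x => (t * x + δ) ^ α with hg
  set gd : ℝ → ℝ → ℝ := fun t x => α * (t * x + δ) ^ (α - 1) * x with hgd
  have hgc : ∀ t : ℝ, Continuous (g t) := by
    intro t
    have : ∀ x : ℝ, ContinuousAt (g t) x := by
      intro x
      exact (Real.continuousAt_rpow_const _ _ (Or.inr hα0.le)).comp
        (((continuous_const.mul continuous_id).add continuous_const).continuousAt)
    exact continuous_iff_continuousAt.mpr this
  have hgdc : ∀ t ∈ Set.Icc (0:ℝ) 1, ContinuousOn (gd t) (spectrum ℝ D) := by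
    intro t ht
    exact ((continuousOn_const.mul (hcontσ (α-1) t ht)).mul continuousOn_id)
  -- the path in C(σ(D), ℝ)
  set G : ℝ → C(spectrum ℝ D, ℝ) := fun t => ⟨_, ((hgc t).continuousOn
    (s := spectrum ℝ D)).restrict⟩ with hG
  -- the continuous linear map given by the cfc
  set L : C(spectrum ℝ D, ℝ) →L[ℝ] (H →L[ℝ] H) :=
    { toLinearMap := ((cfcHom hD (R := ℝ)).toAlgHom.toLinearMap),
      cont := cfcHom_continuous hD } with hL
  have hLapp : ∀ φ : C(spectrum ℝ D, ℝ), L φ = cfcHom hD φ := fun φ => rfl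
  have hGcfc : ∀ t : ℝ, L (G t) = cfc (g t) D := by
    intro t
    rw [hLapp, cfc_apply (g t) D hD ((hgc t).continuousOn)]
  -- derivative of t ↦ cfc (g t) D
  have hGder : ∀ t ∈ Set.Icc (0:ℝ) 1,
      HasDerivWithinAt (fun s => cfc (g s) D) (cfc (gd t) D) (Set.Icc 0 1) t := by
    intro t ht
    have hGd' : cfc (gd t) D = L ⟨_, (hgdc t ht).restrict⟩ := by
      rw [hLapp, cfc_apply (gd t) D hD (hgdc t ht)]
    have key : @HasDerivWithinAt ℝ _ C(spectrum ℝ D, ℝ) NormedAddCommGroup.toAddCommGroup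
        (NormedSpace.toModule (𝕜 := ℝ)) PseudoMetricSpace.toUniformSpace.toTopologicalSpace _ G (⟨_, (hgdc t ht).restrict⟩ : C(spectrum ℝ D, ℝ))
        (Set.Icc 0 1) t := by
      rw [hasDerivWithinAt_iff_tendsto_slope]
      rw [Metric.tendsto_nhdsWithin_nhds]
      intro ε hε
      obtain ⟨η, hη, hkey⟩ := aux_unif (α := α) (M := ‖D‖) hδ (norm_nonneg D)
        (half_pos hε)
      refine ⟨η, hη, ?_⟩
      intro s hs hdist
      have hs1 : s ∈ Set.Icc (0:ℝ) 1 := hs.1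
      have hsne : s ≠ t := by simpa using hs.2
      rw [Real.dist_eq] at hdist
      have hbound : ∀ x : spectrum ℝ D,
          |g s x - g t x - (s - t) * gd t x| ≤ ε / 2 * |s - t| :=
        fun x => hkey t ht s hs1 hdist x (hσsub x.2)
      have hne' : s - t ≠ 0 := sub_ne_zero.2 hsne
      refine lt_of_le_of_lt ?_ (half_lt_self hε)
      rw [ContinuousMap.dist_le (by positivity)]
      intro x
      rw [Real.dist_eq]
      show |(slope G t s) x - gd t ↑x| ≤ ε / 2
      have happ : (slope G t s) x - gd t x
          = (s - t)⁻¹ * (g s x - g t x - (s - t) * gd t x) := by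
        rw [slope_def_module]
        simp only [ContinuousMap.smul_apply, ContinuousMap.sub_apply, smul_eq_mul]
        have : (G s) x = g s x := rfl
        have h2 : (G t) x = g t x := rfl
        rw [this, h2]
        field_simp
      rw [happ, abs_mul, abs_inv]
      calc |s - t|⁻¹ * |g s ↑x - g t ↑x - (s - t) * gd t ↑x|
          ≤ |s - t|⁻¹ * (ε / 2 * |s - t|) :=
            mul_le_mul_of_nonneg_left (hbound x) (by positivity)
        _ = ε / 2 := by field_simp
    have := (L.hasFDerivAt (x := G t)).comp_hasDerivWithinAt t key
    rw [hGd']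
    exact this.congr (fun u _ => (hGcfc u).symm) ((hGcfc t).symm)
  -- auxiliary continuity facts
  have hQc : ∀ t ∈ Set.Icc (0:ℝ) 1,
      ContinuousOn (fun x : ℝ => (t * x + δ) ^ (α - 1)) (spectrum ℝ D) :=
    fun t ht => hcontσ (α - 1) t ht
  have hlin : ∀ t : ℝ, ContinuousOn (fun x : ℝ => t * x + δ) (spectrum ℝ D) :=
    fun t => (continuousOn_const.mul continuousOn_id).add continuousOn_const
  set Q : ℝ → (H →L[ℝ] H) := fun t => cfc (fun x : ℝ => (t * x + δ) ^ (α - 1)) D with hQ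
  have hBcfc : ∀ t : ℝ, cfc (fun x : ℝ => t * x + δ) D = t • D + δ • (1 : H →L[ℝ] H) := by
    intro t
    rw [cfc_add (a := D) (f := fun x : ℝ => t * x) (g := fun _ : ℝ => δ)
        (hf := continuousOn_const.mul continuousOn_id) (hg := continuousOn_const),
      cfc_const δ D hD, cfc_const_mul t (fun x : ℝ => x) D continuousOn_id, cfc_id' ℝ D hD,
      Algebra.algebraMap_eq_smul_one]
  have hmulQ : ∀ t ∈ Set.Icc (0:ℝ) 1, Q t * (t • D + δ • (1 : H →L[ℝ] H)) = cfc (g t) D := by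
    intro t ht
    rw [← hBcfc t, ← cfc_mul _ _ D (hQc t ht) (hlin t)]
    apply cfc_congr
    intro x hx
    have hpos := hbase t ht x hx
    show (t * x + δ) ^ (α - 1) * (t * x + δ) = (t * x + δ) ^ α
    calc (t * x + δ) ^ (α - 1) * (t * x + δ)
        = (t * x + δ) ^ (α - 1) * (t * x + δ) ^ (1 : ℝ) := by rw [Real.rpow_one]
      _ = (t * x + δ) ^ (α - 1 + 1) := (Real.rpow_add hpos _ _).symm
      _ = (t * x + δ) ^ α := by rw [sub_add_cancel]
  have hmulgd : ∀ t ∈ Set.Icc (0:ℝ) 1, cfc (gd t) D = α • (Q t * D) := by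
    intro t ht
    have h1 : cfc (gd t) D = α • cfc (fun x : ℝ => (t * x + δ) ^ (α - 1) * x) D := by
      rw [← cfc_const_mul (a := D) α (fun x : ℝ => (t * x + δ) ^ (α - 1) * x)
        ((hQc t ht).mul continuousOn_id)]
      apply cfc_congr
      intro x hx
      show gd t x = α * ((t * x + δ) ^ (α - 1) * x)
      simp only [hgd]; ring
    rw [h1, cfc_mul (a := D) (f := fun x : ℝ => (t * x + δ) ^ (α - 1)) (g := fun x : ℝ => x)
      (hf := hQc t ht) (hg := continuousOn_id), cfc_id' ℝ D hD]
  -- the conserved quantity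
  set v : ℝ → H := fun t => (cfc (g t) D) (w t) with hv
  have hvder : ∀ t ∈ Set.Icc (0:ℝ) 1, HasDerivWithinAt v 0 (Set.Icc 0 1) t := by
    intro t ht
    have h1 := (hGder t ht).clm_apply ((hderiv t ht).hasDerivWithinAt)
    convert h1 using 1
    rw [hmulgd t ht, ← hmulQ t ht]
    have hB0 : (t • D + δ • (1 : H →L[ℝ] H)) (w' t) = -(α • D (w t)) :=
      eq_neg_of_add_eq_zero_left (heq t ht)
    rw [ContinuousLinearMap.smul_apply, ContinuousLinearMap.mul_apply,
      ContinuousLinearMap.mul_apply, hB0, map_neg, map_smul]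
    simp
  have hcont_v : ContinuousOn v (Set.Icc 0 1) := fun t ht => (hvder t ht).continuousWithinAt
  have hIci : ∀ t ∈ Set.Ico (0:ℝ) 1, HasDerivWithinAt v 0 (Set.Ici t) t := by
    intro t ht
    exact (hvder t (Set.Ico_subset_Icc_self ht)).mono_of_mem_nhdsWithin
      (Icc_mem_nhdsGE_of_mem ht)
  have hconst : v 1 = v 0 :=
    constant_of_has_deriv_right_zero hcont_v hIci 1 (Set.right_mem_Icc.2 zero_le_one)
  -- value at 0
  have hv0 : v 0 = f := by
    show (cfc (g 0) D) (w 0) = f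
    have h1 : cfc (g 0) D = δ ^ α • (1 : H →L[ℝ] H) := by
      have h2 : cfc (g 0) D = cfc (fun _ : ℝ => δ ^ α) D := by
        apply cfc_congr
        intro x hx
        show (0 * x + δ) ^ α = δ ^ α
        rw [zero_mul, zero_add]
      rw [h2, cfc_const (δ ^ α) D hD, Algebra.algebraMap_eq_smul_one]
    rw [h1, hinit, ContinuousLinearMap.smul_apply, ContinuousLinearMap.one_apply, smul_smul,
      ← Real.rpow_add hδ, add_neg_cancel, Real.rpow_zero, one_smul]
  -- value at 1
  have hA : cfc (fun x : ℝ => x + δ) D = D + δ • (1 : H →L[ℝ] H) := by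
    rw [cfc_add (a := D) (f := fun x : ℝ => x) (g := fun _ : ℝ => δ) (hf := continuousOn_id)
        (hg := continuousOn_const), cfc_id' ℝ D hD, cfc_const δ D hD,
      Algebra.algebraMap_eq_smul_one]
  have hv1 : cfc (g 1) D = cfc (fun x : ℝ => x ^ α) (D + δ • (1 : H →L[ℝ] H)) := by
    rw [← hA, ← cfc_comp' (fun x : ℝ => x ^ α) (fun x : ℝ => x + δ) D
      (fun x _ => (Real.continuousAt_rpow_const x α (Or.inr hα0.le)).continuousWithinAt)
      (continuousOn_id.add continuousOn_const) hD]
    apply cfc_congr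
    intro x hx
    show (1 * x + δ) ^ α = (x + δ) ^ α
    rw [one_mul]
  calc (cfc (fun x : ℝ => x ^ α) (D + δ • (1 : H →L[ℝ] H))) (w 1)
      = (cfc (g 1) D) (w 1) := by rw [hv1]
    _ = f := hconst.trans hv0
end

section
/- Let 0 < α < 1 and let w : [0,1] → H be differentiable and satisfy (t·D + δ·I) w'(t) + α D w(t) = 0 for all t ∈ [0,1]. Then ‖w(t)‖ ≤ ‖w(0)‖ for all t ∈ [0,1]. -/
open scoped RealInnerProductSpace

/-- If `w` is differentiable on `[0,1]` and satisfies
`(tD + δI) w'(t) + α D w(t) = 0` there with `0 < α < 1`, then `‖w(t)‖ ≤ ‖w(0)‖` on `[0,1]`. -/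
theorem stmt_7 {H : Type*} [NormedAddCommGroup H] [InnerProductSpace ℝ H] [CompleteSpace H]
    (D : H →L[ℝ] H) (hD : IsSelfAdjoint D) (hDpos : ∀ v : H, 0 ≤ ⟪D v, v⟫)
    (δ : ℝ) (hδ : 0 < δ) (α : ℝ) (hα0 : 0 < α) (hα1 : α < 1)
    (w w' : ℝ → H)
    (hderiv : ∀ t ∈ Set.Icc (0 : ℝ) 1, HasDerivAt w (w' t) t)
    (heq : ∀ t ∈ Set.Icc (0 : ℝ) 1,
      (t • D + δ • (1 : H →L[ℝ] H)) (w' t) + α • D (w t) = 0) :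
    ∀ t ∈ Set.Icc (0 : ℝ) 1, ‖w t‖ ≤ ‖w 0‖ := by
  have hsym : ∀ x y : H, ⟪D x, y⟫ = ⟪x, D y⟫ :=
    (ContinuousLinearMap.isSelfAdjoint_iff_isSymmetric.mp hD)
  -- pointwise: ⟪w' t, w t⟫ ≤ 0
  have key : ∀ t ∈ Set.Icc (0:ℝ) 1, ⟪w' t, w t⟫ ≤ 0 := by
    intro t ht
    obtain ⟨ht0, ht1⟩ := ht
    have h1 : t • D (w' t) + δ • (w' t) + α • D (w t) = 0 := by
      simpa [ContinuousLinearMap.add_apply, ContinuousLinearMap.smul_apply] using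
        heq t ⟨ht0, ht1⟩
    set b := ⟪D (w t), w' t⟫ with hb_def
    set g := ⟪D (w t), w t⟫ with hg_def
    set d := ⟪D (w' t), w' t⟫ with hd_def
    have hg : 0 ≤ g := hDpos _
    have hd : 0 ≤ d := hDpos _
    have hsymb : ⟪D (w' t), w t⟫ = b := by
      rw [hsym, real_inner_comm]
    -- Cauchy–Schwarz for the nonnegative form
    have hcs : b ^ 2 ≤ g * d := by
      have hq : ∀ r : ℝ, 0 ≤ d * (r * r) + (2 * b) * r + g := by
        intro r
        have h0 := hDpos (w t + r • w' t)
        have hexp : ⟪D (w t + r • w' t), w t + r • w' t⟫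
            = d * (r * r) + (2 * b) * r + g := by
          simp only [map_add, map_smul, inner_add_left, inner_add_right,
            real_inner_smul_left, real_inner_smul_right, hsymb]
          rw [← hb_def, ← hg_def, ← hd_def]
          ring
        linarith [hexp ▸ h0]
      have := discrim_le_zero hq
      rw [discrim] at this
      nlinarith [this]
    -- test equation against w' t
    have e1 : t * d + δ * ⟪w' t, w' t⟫ + α * b = 0 := by
      have := congrArg (fun v => ⟪v, w' t⟫) h1
      simpa [inner_add_left, real_inner_smul_left, real_inner_comm (w' t) (w t)] using this
    -- test equation against w t
    have e2 : t * b + δ * ⟪w' t, w t⟫ + α * g = 0 := by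
      have := congrArg (fun v => ⟪v, w t⟫) h1
      simpa [inner_add_left, real_inner_smul_left, hsymb] using this
    have hn : (0:ℝ) ≤ ⟪w' t, w' t⟫ := real_inner_self_nonneg
    -- from e1: α * b = -(t*d + δ*n) ≤ 0 hence b ≤ 0
    have hb0 : b ≤ 0 := by nlinarith [mul_nonneg ht0 hd, mul_nonneg hδ.le hn]
    -- show 0 ≤ t*b + α*g, then conclude from e2
    have htd : t * d ≤ α * (-b) := by nlinarith [mul_nonneg hδ.le hn]
    have h3 : (t * b) ^ 2 ≤ α * g * (-(t * b)) := by
      calc (t * b) ^ 2 = t ^ 2 * b ^ 2 := by ring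
        _ ≤ t ^ 2 * (g * d) := by nlinarith [sq_nonneg t, hcs]
        _ = g * (t * (t * d)) := by ring
        _ ≤ g * (t * (α * (-b))) := by
            apply mul_le_mul_of_nonneg_left _ hg
            exact mul_le_mul_of_nonneg_left htd ht0
        _ = α * g * (-(t * b)) := by ring
    have hX : 0 ≤ -(t * b) := by nlinarith [mul_nonneg ht0 (neg_nonneg.mpr hb0)]
    have hag : 0 ≤ α * g := mul_nonneg hα0.le hg
    have hmain : 0 ≤ t * b + α * g := by
      nlinarith [h3, hX, hag, sq_nonneg (t * b + α * g)]
    have h4 : δ * ⟪w' t, w t⟫ ≤ δ * 0 := by linarith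
    exact le_of_mul_le_mul_left h4 hδ
  -- norm squared is antitone
  have hF : ∀ t ∈ Set.Icc (0:ℝ) 1,
      HasDerivAt (fun s => ⟪w s, w s⟫) (2 * ⟪w' t, w t⟫) t := by
    intro t ht
    have := (hderiv t ht).inner (𝕜 := ℝ) (hderiv t ht)
    simpa [real_inner_comm, two_mul] using this
  have hanti : AntitoneOn (fun s => ⟪w s, w s⟫) (Set.Icc (0:ℝ) 1) := by
    apply antitoneOn_of_deriv_nonpos (convex_Icc 0 1)
    · intro t ht
      exact (hF t ht).continuousAt.continuousWithinAt
    · intro t ht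
      rw [interior_Icc] at ht
      exact (hF t (Set.mem_Icc_of_Ioo ht)).differentiableAt.differentiableWithinAt
    · intro t ht
      rw [interior_Icc] at ht
      have hmem : t ∈ Set.Icc (0:ℝ) 1 := Set.mem_Icc_of_Ioo ht
      rw [(hF t hmem).deriv]
      have := key t hmem
      linarith
  intro t ht
  have h0 : (0:ℝ) ∈ Set.Icc (0:ℝ) 1 := by constructor <;> norm_num
  have := hanti h0 ht ht.1
  have h1 : ⟪w t, w t⟫ = ‖w t‖^2 := real_inner_self_eq_norm_sq _
  have h2 : ⟪w 0, w 0⟫ = ‖w 0‖^2 := real_inner_self_eq_norm_sq _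
  nlinarith [norm_nonneg (w t), norm_nonneg (w 0), this, h1, h2]
end

section
/- Let 1/2 < α < 1 and let w : [0,1] → H be differentiable and satisfy (t·D + δ·I) w'(t) + α D w(t) = 0 for all t ∈ [0,1]. Then for all t ∈ [0,1], δ ‖w(t)‖² + 2α t ⟨D w(t), w(t)⟩ ≤ δ ‖w(0)‖². -/
open scoped RealInnerProductSpace

/-- If `1/2 < α < 1` and `w` solves `(tD + δI) w'(t) + α D w(t) = 0` on `[0,1]`,
then `δ ‖w(t)‖² + 2α t ⟨D w(t), w(t)⟩ ≤ δ ‖w(0)‖²` on `[0,1]`. -/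
theorem stmt_8 {H : Type*} [NormedAddCommGroup H] [InnerProductSpace ℝ H] [CompleteSpace H]
    (D : H →L[ℝ] H) (hD : IsSelfAdjoint D) (hDpos : ∀ v : H, 0 ≤ ⟪D v, v⟫)
    (δ : ℝ) (hδ : 0 < δ) (α : ℝ) (hα0 : 1 / 2 < α) (hα1 : α < 1)
    (w w' : ℝ → H)
    (hderiv : ∀ t ∈ Set.Icc (0 : ℝ) 1, HasDerivAt w (w' t) t)
    (heq : ∀ t ∈ Set.Icc (0 : ℝ) 1,
      (t • D + δ • (1 : H →L[ℝ] H)) (w' t) + α • D (w t) = 0) :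
    ∀ t ∈ Set.Icc (0 : ℝ) 1,
      δ * ‖w t‖ ^ 2 + 2 * α * t * ⟪D (w t), w t⟫ ≤ δ * ‖w 0‖ ^ 2 := by
  have hsym : ∀ x y : H, ⟪D x, y⟫ = ⟪x, D y⟫ :=
    (ContinuousLinearMap.isSelfAdjoint_iff_isSymmetric.mp hD)
  set f : ℝ → ℝ := fun s => δ * ⟪w s, w s⟫ + 2 * α * s * ⟪D (w s), w s⟫ with hf
  set f' : ℝ → ℝ := fun s =>
    δ * (⟪w s, w' s⟫ + ⟪w' s, w s⟫) +
      2 * α * (⟪D (w s), w s⟫ + s * (⟪D (w s), w' s⟫ + ⟪D (w' s), w s⟫)) with hf'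
  have key : ∀ s ∈ Set.Icc (0 : ℝ) 1, HasDerivAt f (f' s) s := by
    intro s hs
    have hw := hderiv s hs
    have hDw : HasDerivAt (fun u => D (w u)) (D (w' s)) s :=
      (D.hasFDerivAt.comp_hasDerivAt s hw)
    have h1 : HasDerivAt (fun u => ⟪w u, w u⟫) (⟪w s, w' s⟫ + ⟪w' s, w s⟫) s := by
      simpa using hw.inner ℝ hw
    have h2 : HasDerivAt (fun u => ⟪D (w u), w u⟫) (⟪D (w s), w' s⟫ + ⟪D (w' s), w s⟫) s := by
      simpa using hDw.inner ℝ hw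
    have h3 : HasDerivAt (fun u : ℝ => u * ⟪D (w u), w u⟫)
        (1 * ⟪D (w s), w s⟫ + s * (⟪D (w s), w' s⟫ + ⟪D (w' s), w s⟫)) s :=
      (hasDerivAt_id s).mul h2
    have := (h1.const_mul δ).add ((h3.const_mul (2 * α)))
    simp only [hf, hf']
    convert this using 1
    case e'_8 => funext u; simp only [Pi.add_apply]; ring
    case e'_9 => ring
    all_goals rfl
  have hcont : ContinuousOn f (Set.Icc 0 1) :=
    fun s hs => (key s hs).continuousAt.continuousWithinAt
  have hnonpos : ∀ s ∈ Set.Ioo (0 : ℝ) 1, f' s ≤ 0 := by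
    intro s hs
    have hs' : s ∈ Set.Icc (0 : ℝ) 1 := Set.mem_Icc.mpr ⟨le_of_lt hs.1, le_of_lt hs.2⟩
    have hv : s • D (w' s) + δ • (w' s) + α • D (w s) = 0 := by
      have := heq s hs'
      simpa [ContinuousLinearMap.add_apply, ContinuousLinearMap.smul_apply, add_assoc] using this
    have eq1 : s * ⟪D (w' s), w s⟫ + δ * ⟪w' s, w s⟫ + α * ⟪D (w s), w s⟫ = 0 := by
      have := congrArg (fun v => ⟪v, w s⟫) hv
      simpa [inner_add_left, real_inner_smul_left] using this
    have eq2 : s * ⟪D (w' s), w' s⟫ + δ * ⟪w' s, w' s⟫ + α * ⟪D (w s), w' s⟫ = 0 := by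
      have := congrArg (fun v => ⟪v, w' s⟫) hv
      simpa [inner_add_left, real_inner_smul_left] using this
    have hsymm : ⟪D (w' s), w s⟫ = ⟪D (w s), w' s⟫ := by
      rw [hsym]; exact real_inner_comm _ _
    have hcomm : ⟪w' s, w s⟫ = ⟪w s, w' s⟫ := real_inner_comm _ _
    have hp : 0 ≤ ⟪D (w' s), w' s⟫ := hDpos _
    have hq : 0 ≤ ⟪w' s, w' s⟫ := real_inner_self_nonneg
    have ha : α * ⟪D (w s), w' s⟫ ≤ 0 := by nlinarith [hs.1.le]
    have ha' : ⟪D (w s), w' s⟫ ≤ 0 := by nlinarith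
    simp only [hf', hsymm, hcomm]
    rw [hsymm] at eq1
    nlinarith [mul_nonneg hs.1.le (neg_nonneg.mpr ha')]
  have hA : AntitoneOn f (Set.Icc 0 1) := by
    apply antitoneOn_of_deriv_nonpos (convex_Icc 0 1) hcont
    · intro s hs
      rw [interior_Icc] at hs
      exact (key s (Set.mem_Icc.mpr ⟨hs.1.le, hs.2.le⟩)).differentiableAt.differentiableWithinAt
    · intro s hs
      rw [interior_Icc] at hs
      rw [(key s (Set.mem_Icc.mpr ⟨hs.1.le, hs.2.le⟩)).deriv]
      exact hnonpos s hs
  intro t ht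
  have h0 : (0 : ℝ) ∈ Set.Icc (0 : ℝ) 1 := by norm_num
  have := hA h0 ht ht.1
  simp only [hf] at this
  have e1 : ⟪w t, w t⟫ = ‖w t‖ ^ 2 := real_inner_self_eq_norm_sq _
  have e2 : ⟪w 0, w 0⟫ = ‖w 0‖ ^ 2 := real_inner_self_eq_norm_sq _
  nlinarith [this]
end

section
/- Let 1/2 < α < 1 and let w : [0,1] → H be differentiable and satisfy (t·D + δ·I) w'(t) + α D w(t) = 0 for all t ∈ [0,1]. Then the function t ↦ δ ‖w(t)‖² + 2α t ⟨D w(t), w(t)⟩ is nonincreasing on [0,1]. -/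
open scoped RealInnerProductSpace

/-- If `1/2 < α < 1` and `w` solves `(tD + δI) w'(t) + α D w(t) = 0` on `[0,1]`,
then `t ↦ δ ‖w(t)‖² + 2α t ⟨D w(t), w(t)⟩` is nonincreasing on `[0,1]`. -/
theorem stmt_9 {H : Type*} [NormedAddCommGroup H] [InnerProductSpace ℝ H] [CompleteSpace H]
    (D : H →L[ℝ] H) (hD : IsSelfAdjoint D) (hDpos : ∀ v : H, 0 ≤ ⟪D v, v⟫)
    (δ : ℝ) (hδ : 0 < δ) (α : ℝ) (hα0 : 1 / 2 < α) (hα1 : α < 1)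
    (w w' : ℝ → H)
    (hderiv : ∀ t ∈ Set.Icc (0 : ℝ) 1, HasDerivAt w (w' t) t)
    (heq : ∀ t ∈ Set.Icc (0 : ℝ) 1,
      (t • D + δ • (1 : H →L[ℝ] H)) (w' t) + α • D (w t) = 0) :
    AntitoneOn (fun t : ℝ => δ * ‖w t‖ ^ 2 + 2 * α * t * ⟪D (w t), w t⟫)
      (Set.Icc (0 : ℝ) 1) := by
  have hfun : (fun t : ℝ => δ * ‖w t‖ ^ 2 + 2 * α * t * ⟪D (w t), w t⟫)
      = fun t : ℝ => δ * ⟪w t, w t⟫ + 2 * α * t * ⟪D (w t), w t⟫ := by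
    funext t
    rw [real_inner_self_eq_norm_sq]
  rw [hfun]
  -- the derivative of the function at each point of Icc
  have key : ∀ t ∈ Set.Icc (0 : ℝ) 1,
      HasDerivAt (fun t : ℝ => δ * ⟪w t, w t⟫ + 2 * α * t * ⟪D (w t), w t⟫)
        (δ * (⟪w t, w' t⟫ + ⟪w' t, w t⟫)
          + (2 * α * ⟪D (w t), w t⟫
            + 2 * α * t * (⟪D (w t), w' t⟫ + ⟪D (w' t), w t⟫))) t := by
    intro t ht
    have h1 := hderiv t ht
    have hDw : HasDerivAt (fun s => D (w s)) (D (w' t)) t :=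
      D.hasFDerivAt.comp_hasDerivAt t h1
    have hi1 : HasDerivAt (fun s => ⟪w s, w s⟫) (⟪w t, w' t⟫ + ⟪w' t, w t⟫) t :=
      h1.inner ℝ h1
    have hi2 : HasDerivAt (fun s => ⟪D (w s), w s⟫)
        (⟪D (w t), w' t⟫ + ⟪D (w' t), w t⟫) t := hDw.inner ℝ h1
    have h3 : HasDerivAt (fun s : ℝ => 2 * α * s * ⟪D (w s), w s⟫)
        (2 * α * ⟪D (w t), w t⟫ + 2 * α * t * (⟪D (w t), w' t⟫ + ⟪D (w' t), w t⟫)) t := by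
      have := ((hasDerivAt_id t).const_mul (2 * α)).mul hi2
      simpa [Pi.mul_def, mul_comm, mul_assoc, mul_left_comm] using this
    exact (hi1.const_mul δ).add h3
  -- the derivative is nonpositive
  have hnonpos : ∀ t ∈ Set.Icc (0 : ℝ) 1,
      δ * (⟪w t, w' t⟫ + ⟪w' t, w t⟫)
        + (2 * α * ⟪D (w t), w t⟫
          + 2 * α * t * (⟪D (w t), w' t⟫ + ⟪D (w' t), w t⟫)) ≤ 0 := by
    intro t ht
    have hvec : t • D (w' t) + δ • w' t + α • D (w t) = 0 := by
      have := heq t ht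
      simpa [ContinuousLinearMap.add_apply, ContinuousLinearMap.smul_apply,
        add_assoc] using this
    have hsym : ⟪D (w' t), w t⟫ = ⟪D (w t), w' t⟫ := by
      have h := hD.isSymmetric (w' t) (w t)
      simp only [ContinuousLinearMap.coe_coe] at h
      rw [h, real_inner_comm]
    have hA : t * ⟪D (w' t), w t⟫ + δ * ⟪w' t, w t⟫ + α * ⟪D (w t), w t⟫ = 0 := by
      have := congrArg (fun v => ⟪v, w t⟫) hvec
      simpa [inner_add_left, real_inner_smul_left] using this
    have hB : t * ⟪D (w' t), w' t⟫ + δ * ⟪w' t, w' t⟫ + α * ⟪D (w t), w' t⟫ = 0 := by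
      have := congrArg (fun v => ⟪v, w' t⟫) hvec
      simpa [inner_add_left, real_inner_smul_left] using this
    have hc : 0 ≤ ⟪D (w' t), w' t⟫ := hDpos (w' t)
    have hn : 0 ≤ ⟪w' t, w' t⟫ := real_inner_self_nonneg
    have hcomm : ⟪w t, w' t⟫ = ⟪w' t, w t⟫ := real_inner_comm _ _
    have ht0 : 0 ≤ t := ht.1
    rw [hsym] at hA
    rw [hsym, hcomm]
    have hBt : t * t * ⟪D (w' t), w' t⟫ + t * δ * ⟪w' t, w' t⟫
        + α * (t * ⟪D (w t), w' t⟫) = 0 := by linear_combination t * hB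
    have htb : t * ⟪D (w t), w' t⟫ ≤ 0 := by
      nlinarith [mul_nonneg (mul_nonneg ht0 ht0) hc,
        mul_nonneg (mul_nonneg ht0 hδ.le) hn]
    nlinarith [htb, hA]
  apply antitoneOn_of_deriv_nonpos (convex_Icc 0 1)
  · exact fun t ht => ((key t ht).continuousAt).continuousWithinAt
  · intro t ht
    rw [interior_Icc] at ht
    exact ((key t (Set.mem_Icc_of_Ioo ht)).differentiableAt).differentiableWithinAt
  · intro t ht
    rw [interior_Icc] at ht
    have h := key t (Set.mem_Icc_of_Ioo ht)
    rw [h.deriv]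
    exact hnonpos t (Set.mem_Icc_of_Ioo ht)
end

section
/- Let α = 1/2 and let w : [0,1] → H be differentiable and satisfy (t·D + δ·I) w'(t) + (1/2) D w(t) = 0 for all t ∈ [0,1]. Then for all t ∈ [0,1] the equality δ ‖w(t)‖² + t ⟨D w(t), w(t)⟩ = δ ‖w(0)‖² holds. -/
open scoped RealInnerProductSpace

/-- For `α = 1/2`, if `w` solves `(tD + δI) w'(t) + (1/2) D w(t) = 0` on `[0,1]`,
then `δ ‖w(t)‖² + t ⟨D w(t), w(t)⟩ = δ ‖w(0)‖²` on `[0,1]`. -/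
theorem stmt_10 {H : Type*} [NormedAddCommGroup H] [InnerProductSpace ℝ H] [CompleteSpace H]
    (D : H →L[ℝ] H) (hD : IsSelfAdjoint D) (hDpos : ∀ v : H, 0 ≤ ⟪D v, v⟫)
    (δ : ℝ) (hδ : 0 < δ)
    (w w' : ℝ → H)
    (hderiv : ∀ t ∈ Set.Icc (0 : ℝ) 1, HasDerivAt w (w' t) t)
    (heq : ∀ t ∈ Set.Icc (0 : ℝ) 1,
      (t • D + δ • (1 : H →L[ℝ] H)) (w' t) + (1 / 2 : ℝ) • D (w t) = 0) :
    ∀ t ∈ Set.Icc (0 : ℝ) 1,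
      δ * ‖w t‖ ^ 2 + t * ⟪D (w t), w t⟫ = δ * ‖w 0‖ ^ 2 := by
  set f : ℝ → ℝ := fun t => δ * ‖w t‖ ^ 2 + t * ⟪D (w t), w t⟫ with hf
  have key : ∀ t ∈ Set.Icc (0 : ℝ) 1, HasDerivAt f 0 t := by
    intro t ht
    have hw := hderiv t ht
    have hDw : HasDerivAt (fun s => D (w s)) (D (w' t)) t :=
      (D.hasFDerivAt.comp_hasDerivAt t hw)
    have h1 : HasDerivAt (fun s => (⟪w s, w s⟫ : ℝ))
        (⟪w t, w' t⟫ + ⟪w' t, w t⟫) t := hw.inner ℝ hw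
    have h1' : HasDerivAt (fun s => ‖w s‖ ^ 2) (2 * ⟪w' t, w t⟫) t := by
      have : (fun s => ‖w s‖ ^ 2) = fun s => (⟪w s, w s⟫ : ℝ) := by
        funext s; rw [real_inner_self_eq_norm_sq]
      rw [this]
      convert h1 using 1
      rw [real_inner_comm (w t) (w' t)]; ring
    have h2 : HasDerivAt (fun s => (⟪D (w s), w s⟫ : ℝ))
        (⟪D (w t), w' t⟫ + ⟪D (w' t), w t⟫) t := hDw.inner ℝ hw
    have h3 : HasDerivAt (fun s => s * ⟪D (w s), w s⟫)
        (1 * ⟪D (w t), w t⟫ + t * (⟪D (w t), w' t⟫ + ⟪D (w' t), w t⟫)) t :=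
      (hasDerivAt_id t).mul h2
    have h4 := ((h1'.const_mul δ).add h3)
    -- now show the derivative value is 0
    have heqt := heq t ht
    have heqt' : t • D (w' t) + δ • w' t + (1 / 2 : ℝ) • D (w t) = 0 := by
      simpa using heqt
    have hip : t * ⟪D (w' t), w t⟫ + δ * ⟪w' t, w t⟫
        + (1 / 2 : ℝ) * ⟪D (w t), w t⟫ = 0 := by
      have := congrArg (fun v => (⟪v, w t⟫ : ℝ)) heqt'
      simpa [inner_add_left, real_inner_smul_left] using this
    have hsym : ⟪D (w t), w' t⟫ = ⟪D (w' t), w t⟫ := by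
      have h := hD.isSymmetric (w t) (w' t)
      exact h.trans (real_inner_comm _ _)
    have hval : δ * (2 * ⟪w' t, w t⟫)
        + (1 * ⟪D (w t), w t⟫ + t * (⟪D (w t), w' t⟫ + ⟪D (w' t), w t⟫)) = 0 := by
      rw [hsym]; nlinarith [hip]
    rw [hval] at h4
    exact h4
  have hcont : ContinuousOn f (Set.Icc (0 : ℝ) 1) := fun t ht =>
    (key t ht).continuousAt.continuousWithinAt
  intro t ht
  have := constant_of_has_deriv_right_zero hcont
    (fun x hx => (key x (Set.mem_Icc_of_Ico hx)).hasDerivWithinAt) t ht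
  simpa [hf] using this
end

section
/- Let σ ≥ 1/2. If the pair (wⁿ, wⁿ⁺¹) satisfies one step of the weighted scheme, i.e. t^{σ(n)} D ((wⁿ⁺¹ − wⁿ)/τ) + δ (wⁿ⁺¹ − wⁿ)/τ + α D w^{σ(n)} = 0, then ‖wⁿ⁺¹‖ ≤ ‖wⁿ‖. -/
open scoped RealInnerProductSpace

/-- For `σ ≥ 1/2`, one step of the weighted scheme implies `‖wⁿ⁺¹‖ ≤ ‖wⁿ‖`. -/
theorem stmt_11 {H : Type*} [NormedAddCommGroup H] [InnerProductSpace ℝ H] [CompleteSpace H]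
    (D : H →L[ℝ] H) (hD : IsSelfAdjoint D) (hDpos : ∀ v : H, 0 ≤ ⟪D v, v⟫)
    (δ : ℝ) (hδ : 0 < δ) (α : ℝ) (hα0 : 0 < α) (hα1 : α < 1)
    (N : ℕ) (hN : 0 < N) (τ : ℝ) (hτ : τ = 1 / N)
    (t : ℕ → ℝ) (ht : ∀ n, t n = n * τ)
    (σ : ℝ) (hσ : 1 / 2 ≤ σ)
    (n : ℕ) (hn : n < N) (wn wn1 : H)
    (hscheme :
      (σ * t (n + 1) + (1 - σ) * t n) • D (τ⁻¹ • (wn1 - wn))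
        + δ • (τ⁻¹ • (wn1 - wn))
        + α • D (σ • wn1 + (1 - σ) • wn) = 0) :
    ‖wn1‖ ≤ ‖wn‖ := by
  have hτpos : 0 < τ := by
    rw [hτ]; positivity
  have hτne : τ ≠ 0 := ne_of_gt hτpos
  have hn0 : (0:ℝ) ≤ (n:ℝ) := Nat.cast_nonneg n
  set ts : ℝ := σ * t (n + 1) + (1 - σ) * t n with hts
  have htseq : ts = ((n:ℝ) + σ) * τ := by
    rw [hts, ht, ht]; push_cast; ring
  have htspos : 0 < ts := by
    rw [htseq]; nlinarith [mul_nonneg hn0 hτpos.le, mul_pos (show (0:ℝ) < σ by linarith) hτpos]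
  set wσ : H := σ • wn1 + (1 - σ) • wn with hwσ
  set u : H := ts • (wn1 - wn) + (α * τ) • wσ with hu
  have h3 : D u + δ • (wn1 - wn) = 0 := by
    rw [hu]
    simp only [map_add, map_smul]
    have h := congrArg (fun v => τ • v) hscheme
    simp only [smul_add, smul_zero, smul_smul, map_smul] at h
    rw [show τ * (ts * τ⁻¹) = ts by field_simp, show τ * (δ * τ⁻¹) = δ by field_simp,
      show τ * α = α * τ by ring] at h
    linear_combination (norm := module) h
  have h4 : ⟪D u, u⟫ + δ * ⟪wn1 - wn, u⟫ = 0 := by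
    have h := congrArg (fun v => ⟪v, u⟫) h3
    simpa [inner_add_left, real_inner_smul_left] using h
  have hkey : ⟪wn1 - wn, u⟫ ≤ 0 := by nlinarith [hDpos u]
  set c1 : ℝ := ts + α * τ * σ with hc1def
  set c2 : ℝ := α * τ * (1 - σ) - ts with hc2def
  have hu2 : u = c1 • wn1 + c2 • wn := by
    rw [hu, hwσ, hc1def, hc2def]; module
  have hexp : ⟪wn1 - wn, u⟫
      = c1 * ‖wn1‖ ^ 2 - c2 * ‖wn‖ ^ 2 + (c2 - c1) * ⟪wn, wn1⟫ := by
    rw [hu2]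
    simp only [inner_sub_left, inner_add_right, real_inner_smul_right,
      real_inner_self_eq_norm_sq, real_inner_comm wn1 wn]
    ring
  have hατ : 0 < α * τ := mul_pos hα0 hτpos
  have hc1 : 0 < c1 := by
    rw [hc1def]; nlinarith [mul_pos hατ (show (0:ℝ) < σ by linarith)]
  have hc21 : c2 - c1 ≤ 0 := by
    rw [hc1def, hc2def]; nlinarith
  have hsum : c1 + c2 = α * τ := by rw [hc1def, hc2def]; ring
  have hab : ⟪wn, wn1⟫ ≤ ‖wn‖ * ‖wn1‖ := real_inner_le_norm wn wn1
  clear_value ts wσ u c1 c2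
  rw [hexp] at hkey
  by_contra hlt
  push_neg at hlt
  have step1 : (c2 - c1) * (‖wn‖ * ‖wn1‖) ≤ (c2 - c1) * ⟪wn, wn1⟫ :=
    mul_le_mul_of_nonpos_left hab hc21
  have step2 : c1 * ‖wn1‖ ^ 2 - c2 * ‖wn‖ ^ 2 + (c2 - c1) * (‖wn‖ * ‖wn1‖) ≤ 0 := by
    linarith
  have hfac : (‖wn1‖ - ‖wn‖) * (c1 * ‖wn1‖ + c2 * ‖wn‖) ≤ 0 := by
    have heq : (‖wn1‖ - ‖wn‖) * (c1 * ‖wn1‖ + c2 * ‖wn‖)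
        = c1 * ‖wn1‖ ^ 2 - c2 * ‖wn‖ ^ 2 + (c2 - c1) * (‖wn‖ * ‖wn1‖) := by ring
    rw [heq]; exact step2
  have hsumy : 0 ≤ (c1 + c2) * ‖wn‖ := by rw [hsum]; positivity
  have hpos2 : 0 < c1 * ‖wn1‖ + c2 * ‖wn‖ := by
    have h1 : 0 < c1 * (‖wn1‖ - ‖wn‖) := mul_pos hc1 (sub_pos.2 hlt)
    have h2 : c1 * ‖wn1‖ + c2 * ‖wn‖ = c1 * (‖wn1‖ - ‖wn‖) + (c1 + c2) * ‖wn‖ := by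
      ring
    rw [h2]
    exact add_pos_of_pos_of_nonneg h1 hsumy
  have hcontr : 0 < (‖wn1‖ - ‖wn‖) * (c1 * ‖wn1‖ + c2 * ‖wn‖) :=
    mul_pos (sub_pos.2 hlt) hpos2
  linarith
end

section
/- Let σ ≥ 1/2, let f ∈ H, and let w⁰, w¹, …, w^N ∈ H satisfy w⁰ = δ^{−α} f and, for every n = 0,…,N−1, the weighted scheme t^{σ(n)} D ((wⁿ⁺¹ − wⁿ)/τ) + δ (wⁿ⁺¹ − wⁿ)/τ + α D w^{σ(n)} = 0. Then ‖wⁿ⁺¹‖ ≤ δ^{−α} ‖f‖ for all n = 0,…,N−1. -/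
open scoped RealInnerProductSpace

set_option maxHeartbeats 800000

lemma key_step {H : Type*} [NormedAddCommGroup H] [InnerProductSpace ℝ H] [CompleteSpace H]
    (D : H →L[ℝ] H) (hD : IsSelfAdjoint D) (hDpos : ∀ v : H, 0 ≤ ⟪D v, v⟫)
    (Q c a : ℝ) (hQ : 0 ≤ Q) (hc : 0 < c) (ha : 0 < a)
    (u d : H) (heq : Q • D d + c • d + a • D u = 0) :
    ‖u‖ ≤ ‖u - d‖ := by
  have hsym : ∀ x y : H, ⟪D x, y⟫ = ⟪x, D y⟫ := fun x y => hD.isSymmetric x y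
  set qd : ℝ := ⟪D d, d⟫ with hqd_def
  set qu : ℝ := ⟪D u, u⟫ with hqu_def
  set e : ℝ := ⟪D u, d⟫ with he_def
  have hqd0 : 0 ≤ qd := hDpos d
  have hqu0 : 0 ≤ qu := hDpos u
  have hswap : ⟪D d, u⟫ = e := by rw [hsym d u, real_inner_comm]
  -- test with d
  have h1' : Q * qd + c * ⟪d, d⟫ + a * e = 0 := by
    have := congrArg (fun y => ⟪y, d⟫) heq
    simpa [inner_add_left, real_inner_smul_left] using this
  have h1 : Q * qd + c * ‖d‖ ^ 2 + a * e = 0 := by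
    rwa [real_inner_self_eq_norm_sq d] at h1'
  -- test with u
  have h2 : Q * e + c * ⟪u, d⟫ + a * qu = 0 := by
    have := congrArg (fun y => ⟪y, u⟫) heq
    have hcomm : ⟪d, u⟫ = ⟪u, d⟫ := real_inner_comm u d
    simpa [inner_add_left, real_inner_smul_left, hswap, hcomm] using this
  -- semidefinite quadratic expansion
  have hexp : ∀ s : ℝ, 0 ≤ qu + 2 * s * e + s ^ 2 * qd := by
    intro s
    have h := hDpos (u + s • d)
    have hx : ⟪D (u + s • d), u + s • d⟫ = qu + 2 * s * e + s ^ 2 * qd := by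
      simp only [map_add, map_smul, inner_add_left, inner_add_right,
        real_inner_smul_left, real_inner_smul_right, hswap]
      ring
    rw [hx] at h; exact h
  set nd : ℝ := ‖d‖ ^ 2 with hnd_def
  have hnd0 : 0 ≤ nd := sq_nonneg _
  -- main point: ⟪u, d⟫ ≤ 0
  have hiu : ⟪u, d⟫ ≤ 0 := by
    rcases eq_or_lt_of_le hqd0 with h0 | hpos
    · -- qd = 0 forces e = 0
      have he0 : e = 0 := by
        by_contra hne
        have h := hexp (-(qu + 1) / (2 * e))
        rw [← h0] at h
        have h2e : 2 * (-(qu + 1) / (2 * e)) * e = -(qu + 1) := by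
          field_simp
        nlinarith [h]
      have hciu : c * ⟪u, d⟫ = -(a * qu) := by rw [he0] at h2; linarith
      by_contra hgt
      push_neg at hgt
      linarith [mul_pos hc hgt, hciu, mul_nonneg ha.le hqu0]
    · -- Cauchy-Schwarz for the form
      have hCS : e ^ 2 ≤ qu * qd := by
        have h := hexp (-e / qd)
        have hq : qd ≠ 0 := hpos.ne'
        have hkey : qu + 2 * (-e / qd) * e + (-e / qd) ^ 2 * qd = qu - e ^ 2 / qd := by
          field_simp; ring
        rw [hkey] at h
        have h2' : e ^ 2 / qd ≤ qu := by linarith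
        calc e ^ 2 = e ^ 2 / qd * qd := by field_simp
          _ ≤ qu * qd := mul_le_mul_of_nonneg_right h2' hqd0
      have hae : a * e = -(Q * qd + c * nd) := by linarith
      have haesq : a ^ 2 * e ^ 2 = (Q * qd + c * nd) ^ 2 := by
        linear_combination (a * e - (Q * qd + c * nd)) * hae
      have hCS' : a ^ 2 * e ^ 2 ≤ a ^ 2 * (qu * qd) :=
        mul_le_mul_of_nonneg_left hCS (sq_nonneg a)
      have h8 : (Q * qd + c * nd) ^ 2 ≤ a ^ 2 * (qu * qd) := by linarith
      have h6 : a * c * qd * ⟪u, d⟫ = -(a * Q * qd * e) - a ^ 2 * (qu * qd) := by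
        linear_combination (a * qd) * h2
      have h7 : -(a * Q * qd * e) = Q * qd * (Q * qd + c * nd) := by
        linear_combination (-(Q * qd)) * hae
      have h9 : a * c * qd * ⟪u, d⟫ ≤ -(c * nd) * (Q * qd + c * nd) := by
        nlinarith [h6, h7, h8]
      have h10 : 0 ≤ (c * nd) * (Q * qd + c * nd) :=
        mul_nonneg (mul_nonneg hc.le hnd0)
          (add_nonneg (mul_nonneg hQ hqd0) (mul_nonneg hc.le hnd0))
      have hacqd : 0 < a * c * qd := mul_pos (mul_pos ha hc) hpos
      by_contra hgt
      push_neg at hgt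
      linarith [mul_pos hacqd hgt, h9, h10]
  have hsq : ‖u‖ ^ 2 ≤ ‖u - d‖ ^ 2 := by
    rw [norm_sub_sq_real]
    linarith [hiu, hnd0]
  have := Real.sqrt_le_sqrt hsq
  rwa [Real.sqrt_sq (norm_nonneg _), Real.sqrt_sq (norm_nonneg _)] at this

/-- For `σ ≥ 1/2`, the weighted scheme with `w⁰ = δ^(-α) f` satisfies
`‖wⁿ⁺¹‖ ≤ δ^(-α) ‖f‖` for all `n = 0, …, N-1`. -/
theorem stmt_12 {H : Type*} [NormedAddCommGroup H] [InnerProductSpace ℝ H] [CompleteSpace H]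
    (D : H →L[ℝ] H) (hD : IsSelfAdjoint D) (hDpos : ∀ v : H, 0 ≤ ⟪D v, v⟫)
    (δ : ℝ) (hδ : 0 < δ) (α : ℝ) (hα0 : 0 < α) (hα1 : α < 1)
    (N : ℕ) (hN : 0 < N) (τ : ℝ) (hτ : τ = 1 / N)
    (t : ℕ → ℝ) (ht : ∀ n, t n = n * τ)
    (σ : ℝ) (hσ : 1 / 2 ≤ σ)
    (f : H) (w : ℕ → H) (hinit : w 0 = δ ^ (-α) • f)
    (hscheme : ∀ n < N,
      (σ * t (n + 1) + (1 - σ) * t n) • D (τ⁻¹ • (w (n + 1) - w n))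
        + δ • (τ⁻¹ • (w (n + 1) - w n))
        + α • D (σ • w (n + 1) + (1 - σ) • w n) = 0) :
    ∀ n < N, ‖w (n + 1)‖ ≤ δ ^ (-α) * ‖f‖ := by
  have hτ0 : (0 : ℝ) < τ := by
    rw [hτ]; positivity
  have step : ∀ n, n < N → ‖w (n + 1)‖ ≤ ‖w n‖ := by
    intro n hn
    have hs := hscheme n hn
    set u := w (n + 1) with hu
    set v := w n with hv
    have hQ0 : (0 : ℝ) ≤ (n : ℝ) + σ + α * σ - α := by
      nlinarith [Nat.cast_nonneg (α := ℝ) n, hσ, hα0.le, hα1.le]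
    have heq : ((n : ℝ) + σ + α * σ - α) • D (u - v) + (δ / τ) • (u - v) + α • D u = 0 := by
      have ha1 : σ * t (n + 1) + (1 - σ) * t n = ((n : ℝ) + σ) * τ := by
        rw [ht, ht]; push_cast; ring
      rw [ha1] at hs
      have hd1 : D (τ⁻¹ • (u - v)) = τ⁻¹ • (D u - D v) := by
        rw [map_smul, map_sub]
      have hd2 : D (σ • u + (1 - σ) • v) = σ • D u + (1 - σ) • D v := by
        rw [map_add, map_smul, map_smul]
      rw [hd1, hd2] at hs
      rw [map_sub]
      rw [← hs]
      match_scalars <;> field_simp <;> ring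
    have := key_step D hD hDpos ((n : ℝ) + σ + α * σ - α) (δ / τ) α hQ0
      (by positivity) hα0 u (u - v) heq
    simpa using this
  have mono : ∀ n, n ≤ N → ‖w n‖ ≤ ‖w 0‖ := by
    intro n
    induction n with
    | zero => intro _; exact le_refl _
    | succ k ih =>
      intro hk
      exact le_trans (step k (by omega)) (ih (by omega))
  intro n hn
  have h1 : ‖w (n + 1)‖ ≤ ‖w 0‖ := mono (n + 1) (by omega)
  have h2 : ‖w 0‖ = δ ^ (-α) * ‖f‖ := by
    rw [hinit, norm_smul, Real.norm_eq_abs,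
      abs_of_pos (Real.rpow_pos_of_pos hδ (-α))]
  rw [h2] at h1
  exact h1
end

section
/- Suppose the pair (wⁿ, wⁿ⁺¹) satisfies one step of the symmetric scheme (σ = 1/2): t^{n+1/2} D w_t + δ w_t + α D w̃ = 0, where w_t = (wⁿ⁺¹ − wⁿ)/τ, w̃ = (wⁿ⁺¹ + wⁿ)/2 and t^{n+1/2} = (tⁿ⁺¹ + tⁿ)/2. Then ⟨D wⁿ⁺¹, wⁿ⁺¹⟩ ≤ ⟨D wⁿ, wⁿ⟩. -/
open scoped RealInnerProductSpace

/-- One step of the symmetric scheme (`σ = 1/2`) implies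
`⟨D wⁿ⁺¹, wⁿ⁺¹⟩ ≤ ⟨D wⁿ, wⁿ⟩`. -/
theorem stmt_13 {H : Type*} [NormedAddCommGroup H] [InnerProductSpace ℝ H] [CompleteSpace H]
    (D : H →L[ℝ] H) (hD : IsSelfAdjoint D) (hDpos : ∀ v : H, 0 ≤ ⟪D v, v⟫)
    (δ : ℝ) (hδ : 0 < δ) (α : ℝ) (hα0 : 0 < α) (hα1 : α < 1)
    (N : ℕ) (hN : 0 < N) (τ : ℝ) (hτ : τ = 1 / N)
    (t : ℕ → ℝ) (ht : ∀ n, t n = n * τ)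
    (n : ℕ) (hn : n < N) (wn wn1 : H)
    (wt wmid : H) (hwt : wt = τ⁻¹ • (wn1 - wn)) (hwmid : wmid = (2 : ℝ)⁻¹ • (wn1 + wn))
    (hscheme : ((t (n + 1) + t n) / 2) • D wt + δ • wt + α • D wmid = 0) :
    ⟪D wn1, wn1⟫ ≤ ⟪D wn, wn⟫ := by
  have hτpos : 0 < τ := by
    rw [hτ]; positivity
  have hc : 0 ≤ (t (n + 1) + t n) / 2 := by
    rw [ht, ht]; positivity
  have hsym := hD.isSymmetric
  -- take inner product of the scheme with wt
  have h0 : ⟪((t (n + 1) + t n) / 2) • D wt + δ • wt + α • D wmid, wt⟫ = 0 := by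
    rw [hscheme, inner_zero_left]
  rw [inner_add_left, inner_add_left, inner_smul_left, inner_smul_left, inner_smul_left] at h0
  simp only [RCLike.star_def, conj_trivial] at h0
  have hmid : ⟪D wmid, wt⟫ = (2 * τ)⁻¹ * (⟪D wn1, wn1⟫ - ⟪D wn, wn⟫) := by
    rw [hwmid, hwt, map_smul]
    rw [inner_smul_left, inner_smul_right]
    simp only [RCLike.star_def, conj_trivial]
    have hsw : ⟪D wn, wn1⟫ = ⟪D wn1, wn⟫ := by
      rw [real_inner_comm]; exact (hsym wn1 wn).symm
    rw [map_add, inner_add_left, inner_sub_right, inner_sub_right, hsw]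
    ring
  have h1 : 0 ≤ ((t (n + 1) + t n) / 2) * ⟪D wt, wt⟫ := mul_nonneg hc (hDpos wt)
  have h2 : 0 ≤ δ * ⟪wt, wt⟫ := mul_nonneg hδ.le real_inner_self_nonneg
  have h3 : α * ((2 * τ)⁻¹ * (⟪D wn1, wn1⟫ - ⟪D wn, wn⟫)) ≤ 0 := by
    rw [← hmid]; linarith
  nlinarith [mul_pos hα0 (inv_pos.mpr (by linarith : (0:ℝ) < 2 * τ))]
end

section
/- Let 1/2 < α < 1 and suppose the pair (wⁿ, wⁿ⁺¹) satisfies one step of the symmetric scheme (σ = 1/2): t^{n+1/2} D w_t + δ w_t + α D w̃ = 0, where w_t = (wⁿ⁺¹ − wⁿ)/τ, w̃ = (wⁿ⁺¹ + wⁿ)/2 and t^{n+1/2} = (tⁿ⁺¹ + tⁿ)/2. Then δ ⟨w_t, w̃⟩ + 2α S ≤ 0, where S = t^{n+1/2} ⟨D w_t, w̃⟩ + (1/2) ⟨D w̃, w̃⟩. -/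
open scoped RealInnerProductSpace

/-- For `1/2 < α < 1`, one step of the symmetric scheme implies
`δ ⟨w_t, wmid⟩ + 2α S ≤ 0`, where `S = t^{n+1/2} ⟨D w_t, wmid⟩ + (1/2) ⟨D wmid, wmid⟩`. -/
theorem stmt_14 {H : Type*} [NormedAddCommGroup H] [InnerProductSpace ℝ H] [CompleteSpace H]
    (D : H →L[ℝ] H) (hD : IsSelfAdjoint D) (hDpos : ∀ v : H, 0 ≤ ⟪D v, v⟫)
    (δ : ℝ) (hδ : 0 < δ) (α : ℝ) (hα0 : 1 / 2 < α) (hα1 : α < 1)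
    (N : ℕ) (hN : 0 < N) (τ : ℝ) (hτ : τ = 1 / N)
    (t : ℕ → ℝ) (ht : ∀ n, t n = n * τ)
    (n : ℕ) (hn : n < N) (wn wn1 : H)
    (wt wmid : H) (hwt : wt = τ⁻¹ • (wn1 - wn)) (hwmid : wmid = (2 : ℝ)⁻¹ • (wn1 + wn))
    (hscheme : ((t (n + 1) + t n) / 2) • D wt + δ • wt + α • D wmid = 0)
    (S : ℝ) (hS : S = ((t (n + 1) + t n) / 2) * ⟪D wt, wmid⟫ + (1 / 2) * ⟪D wmid, wmid⟫) :
    δ * ⟪wt, wmid⟫ + 2 * α * S ≤ 0 := by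
  set tm : ℝ := (t (n + 1) + t n) / 2 with htm
  have hτpos : 0 < τ := by
    rw [hτ]; positivity
  have htmpos : 0 ≤ tm := by
    rw [htm, ht, ht]
    positivity
  have hsym : ⟪D wmid, wt⟫ = ⟪D wt, wmid⟫ := by
    rw [real_inner_comm]
    exact (hD.isSymmetric wt wmid).symm
  have h1 : tm * ⟪D wt, wt⟫ + δ * ⟪wt, wt⟫ + α * ⟪D wt, wmid⟫ = (0 : ℝ) := by
    have := congrArg (fun v => ⟪v, wt⟫) hscheme
    simpa [inner_add_left, real_inner_smul_left, hsym, mul_comm, mul_assoc] using this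
  have h2 : tm * ⟪D wt, wmid⟫ + δ * ⟪wt, wmid⟫ + α * ⟪D wmid, wmid⟫ = (0 : ℝ) := by
    have := congrArg (fun v => ⟪v, wmid⟫) hscheme
    simpa [inner_add_left, real_inner_smul_left, mul_comm, mul_assoc] using this
  have hA : α * ⟪D wt, wmid⟫ ≤ 0 := by
    nlinarith [hDpos wt, real_inner_self_nonneg (x := wt), mul_nonneg htmpos (hDpos wt)]
  have hAneg : ⟪D wt, wmid⟫ ≤ 0 := by nlinarith
  rw [hS]
  nlinarith [mul_nonneg htmpos (neg_nonneg.mpr hAneg)]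
end
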